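/- arXiv:2009.03273 — 6 statements merged into one kernel-verified Lean document; each statement's English description precedes it below -/
import Mathlib

section
/- Let 0 < p < ∞, φ ∈ G_p, and let λ = (λ_{j,m})_{m ∈ ℤ^d} be a family of complex numbers for a fixed level j ∈ ℕ₀. Then the generalised Morrey quasi-norm of the step function Σ_m λ_{j,m}·χ_{Q_{j,m}} equals sup over ν ≤ j (ν ∈ ℤ) and k ∈ ℤ^d of φ(2^(-ν))·2^((ν-j)d/p)·(Σ_{m: Q_{j,m} ⊂ Q_{ν,k}} |λ_{j,m}|^p)^(1/p). -/
open MeasureTheory ENNReal NNReal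

/-- The dyadic cube `Q_{j,k} = 2^{-j}([0,1)^d + k)` in `ℝ^d`. -/
def dyadicCube (d : ℕ) (j : ℤ) (k : Fin d → ℤ) : Set (Fin d → ℝ) :=
  {x | ∀ i, (2 : ℝ) ^ (-j) * (k i : ℝ) ≤ x i ∧ x i < (2 : ℝ) ^ (-j) * ((k i : ℝ) + 1)}

namespace MorreyAux

lemma two_zpow_pos (j : ℤ) : (0:ℝ) < 2 ^ j := zpow_pos (by norm_num) j

lemma mem_dyadicCube {d : ℕ} {j : ℤ} {k : Fin d → ℤ} {x : Fin d → ℝ} :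
    x ∈ dyadicCube d j k ↔ ∀ i, ⌊(2:ℝ) ^ j * x i⌋ = k i := by
  have h2 : (0:ℝ) < 2 ^ j := two_zpow_pos j
  simp only [dyadicCube, Set.mem_setOf_eq]
  refine forall_congr' fun i => ?_
  rw [Int.floor_eq_iff, zpow_neg]
  constructor
  · rintro ⟨h1, h1'⟩
    exact ⟨(inv_mul_le_iff₀ h2).1 h1, (lt_inv_mul_iff₀ h2).1 h1'⟩
  · rintro ⟨h1, h1'⟩
    exact ⟨(inv_mul_le_iff₀ h2).2 h1, (lt_inv_mul_iff₀ h2).2 h1'⟩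

lemma floor_div_pow (t : ℝ) (n : ℕ) : ⌊t / 2 ^ n⌋ = ⌊t⌋ / 2 ^ n := by
  have h2 : (0:ℝ) < 2 ^ n := by positivity
  have h2' : (0:ℤ) < 2 ^ n := by positivity
  set m := ⌊t⌋ with hm
  set q := m / (2 ^ n : ℤ) with hq
  have hmod : 2 ^ n * q + m % 2 ^ n = m := Int.mul_ediv_add_emod m (2 ^ n)
  have hr0 : 0 ≤ m % 2 ^ n := Int.emod_nonneg m (by positivity)
  have hr1 : m % 2 ^ n < 2 ^ n := Int.emod_lt_of_pos m h2'
  rw [Int.floor_eq_iff]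
  constructor
  · rw [le_div_iff₀ h2]
    have hle : q * 2 ^ n ≤ m := by linarith
    have hle' : ((q : ℝ)) * 2 ^ n ≤ (m : ℝ) := by exact_mod_cast hle
    exact hle'.trans (Int.floor_le t)
  · rw [div_lt_iff₀ h2]
    have hlt : m + 1 ≤ (q + 1) * 2 ^ n := by linarith
    have h3 : ((m : ℝ) + 1) ≤ ((q : ℝ) + 1) * 2 ^ n := by exact_mod_cast hlt
    calc t < (m : ℝ) + 1 := Int.lt_floor_add_one t
      _ ≤ ((q : ℝ) + 1) * 2 ^ n := h3

lemma floor_scale {ν j : ℤ} (h : ν ≤ j) {x y : ℝ}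
    (hxy : ⌊(2:ℝ) ^ j * x⌋ = ⌊(2:ℝ) ^ j * y⌋) : ⌊(2:ℝ) ^ ν * x⌋ = ⌊(2:ℝ) ^ ν * y⌋ := by
  have key : ∀ t : ℝ, (2:ℝ) ^ ν * t = (2:ℝ) ^ j * t / 2 ^ (j - ν).toNat := by
    intro t
    rw [_root_.eq_div_iff (by positivity)]
    have h1 : ((2:ℝ)) ^ ((j - ν).toNat : ℕ) = (2:ℝ) ^ (j - ν) := by
      rw [← zpow_natCast, Int.toNat_of_nonneg (by omega)]
    rw [h1]
    calc (2:ℝ) ^ ν * t * 2 ^ (j - ν) = 2 ^ ν * 2 ^ (j - ν) * t := by ring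
      _ = 2 ^ (ν + (j - ν)) * t := by rw [zpow_add₀ (by norm_num : (2:ℝ) ≠ 0)]
      _ = 2 ^ j * t := by rw [show ν + (j - ν) = j by omega]
  rw [key x, key y, floor_div_pow, floor_div_pow, hxy]

lemma dyadic_subset_of_mem {d : ℕ} {ν j : ℤ} (hν : ν ≤ j) {m k : Fin d → ℤ}
    {x : Fin d → ℝ} (hxm : x ∈ dyadicCube d j m) (hxk : x ∈ dyadicCube d ν k) :
    dyadicCube d j m ⊆ dyadicCube d ν k := by
  intro y hy
  rw [mem_dyadicCube] at *
  intro i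
  have h1 : ⌊(2:ℝ) ^ j * y i⌋ = ⌊(2:ℝ) ^ j * x i⌋ := (hy i).trans (hxm i).symm
  rw [floor_scale hν h1, hxk i]

lemma corner_mem {d : ℕ} {ν : ℤ} {k : Fin d → ℤ} :
    (fun i => (2:ℝ) ^ (-ν) * k i) ∈ dyadicCube d ν k := fun i =>
  ⟨le_refl _, mul_lt_mul_of_pos_left (lt_add_one _) (two_zpow_pos _)⟩

lemma dyadicCube_eq_pi (d : ℕ) (ν : ℤ) (k : Fin d → ℤ) :
    dyadicCube d ν k =
      Set.univ.pi fun i => Set.Ico ((2:ℝ) ^ (-ν) * k i) ((2:ℝ) ^ (-ν) * (k i + 1)) := by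
  ext x; simp [dyadicCube, Set.mem_pi, Set.mem_Ico]

lemma measurableSet_dyadicCube (d : ℕ) (ν : ℤ) (k : Fin d → ℤ) :
    MeasurableSet (dyadicCube d ν k) := by
  rw [dyadicCube_eq_pi]
  exact MeasurableSet.univ_pi fun i => measurableSet_Ico

lemma volume_dyadicCube (d : ℕ) (ν : ℤ) (k : Fin d → ℤ) :
    volume (dyadicCube d ν k) = ENNReal.ofReal ((2:ℝ) ^ (-ν)) ^ d := by
  rw [dyadicCube_eq_pi, volume_pi_pi]
  have h : ∀ i : Fin d, (2:ℝ) ^ (-ν) * (k i + 1) - (2:ℝ) ^ (-ν) * k i = (2:ℝ) ^ (-ν) :=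
    fun i => by ring
  simp only [Real.volume_Ico, h]
  rw [Finset.prod_const, Finset.card_univ, Fintype.card_fin]

lemma lintegral_step {d : ℕ} (j : ℤ) (F : (Fin d → ℤ) → ℝ≥0∞) (S : Set (Fin d → ℝ)) :
    ∫⁻ x in S, F (fun i => ⌊(2:ℝ) ^ j * x i⌋) =
      ∑' m : Fin d → ℤ, F m * volume (dyadicCube d j m ∩ S) := by
  have hpt : ∀ x : Fin d → ℝ, F (fun i => ⌊(2:ℝ) ^ j * x i⌋) =
      ∑' m : Fin d → ℤ, (dyadicCube d j m).indicator (fun _ => F m) x := by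
    intro x
    rw [tsum_eq_single (fun i => ⌊(2:ℝ) ^ j * x i⌋) ?_]
    · rw [Set.indicator_of_mem (mem_dyadicCube.2 fun i => rfl)]
    · intro m hm
      rw [Set.indicator_of_notMem]
      intro hx
      exact hm (funext fun i => ((mem_dyadicCube.1 hx) i)).symm
  calc ∫⁻ x in S, F (fun i => ⌊(2:ℝ) ^ j * x i⌋)
      = ∫⁻ x in S, ∑' m : Fin d → ℤ, (dyadicCube d j m).indicator (fun _ => F m) x :=
        lintegral_congr fun x => hpt x
    _ = ∑' m : Fin d → ℤ, ∫⁻ x in S, (dyadicCube d j m).indicator (fun _ => F m) x :=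
        lintegral_tsum fun m =>
          (measurable_const.indicator (measurableSet_dyadicCube d j m)).aemeasurable
    _ = ∑' m : Fin d → ℤ, F m * volume (dyadicCube d j m ∩ S) := by
        refine tsum_congr fun m => ?_
        rw [lintegral_indicator (measurableSet_dyadicCube d j m),
          Measure.restrict_restrict (measurableSet_dyadicCube d j m), lintegral_const,
          Measure.restrict_apply_univ]

end MorreyAux

open MorreyAux

set_option maxHeartbeats 1000000

/-- For `0 < p < ∞`, `φ ∈ G_p` and coefficients `(λ_{j,m})_m` at a fixed level
`j ∈ ℕ₀`, the generalised Morrey quasi-norm of the step function `Σ_m λ_{j,m} χ_{Q_{j,m}}`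
equals `sup_{ν ≤ j, k} φ(2^{-ν})·2^{(ν-j)d/p}·(Σ_{m : Q_{j,m} ⊆ Q_{ν,k}} |λ_{j,m}|^p)^{1/p}`. -/
theorem morrey_norm_of_step_function (d : ℕ) (hd : 1 ≤ d) (p : ℝ) (hp : 0 < p)
    (φ : ℝ → ℝ) (hφ0 : ∀ t, 0 < t → 0 ≤ φ t)
    (hmono : MonotoneOn φ (Set.Ioi 0))
    (hanti : AntitoneOn (fun t => φ t * t ^ (-(d : ℝ) / p)) (Set.Ioi 0))
    (j : ℕ) (lam : (Fin d → ℤ) → ℂ) :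
    (⨆ (ν : ℤ) (k : Fin d → ℤ),
        ENNReal.ofReal (φ ((2 : ℝ) ^ (-ν))) *
          ((volume (dyadicCube d ν k))⁻¹ *
            ∫⁻ x in dyadicCube d ν k,
              ENNReal.ofReal
                (‖lam (fun i => ⌊(2 : ℝ) ^ (j : ℤ) * x i⌋)‖ ^ p)) ^ (1 / p)) =
    ⨆ (ν : ℤ) (_ : ν ≤ (j : ℤ)) (k : Fin d → ℤ),
      ENNReal.ofReal (φ ((2 : ℝ) ^ (-ν))) *
        ENNReal.ofReal ((2 : ℝ) ^ ((((ν : ℝ) - (j : ℝ))) * ((d : ℝ) / p))) *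
        (∑' m : {m : Fin d → ℤ // dyadicCube d (j : ℤ) m ⊆ dyadicCube d ν k},
            ENNReal.ofReal (‖lam m.1‖ ^ p)) ^ (1 / p) := by
  have hVpos : ∀ ν : ℤ, (0:ℝ) < (2:ℝ) ^ (-ν) := fun ν => two_zpow_pos _
  have hV0 : ∀ (ν : ℤ) (k : Fin d → ℤ), volume (dyadicCube d ν k) ≠ 0 := by
    intro ν k
    rw [volume_dyadicCube]
    exact pow_ne_zero d (ENNReal.ofReal_pos.2 (hVpos ν)).ne'
  have hVtop : ∀ (ν : ℤ) (k : Fin d → ℤ), volume (dyadicCube d ν k) ≠ ⊤ := by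
    intro ν k
    rw [volume_dyadicCube]
    exact ENNReal.pow_ne_top ENNReal.ofReal_ne_top
  -- the main computation, for ν ≤ j
  have key : ∀ ν : ℤ, ν ≤ (j : ℤ) → ∀ k : Fin d → ℤ,
      ENNReal.ofReal (φ ((2 : ℝ) ^ (-ν))) *
          ((volume (dyadicCube d ν k))⁻¹ *
            ∫⁻ x in dyadicCube d ν k,
              ENNReal.ofReal
                (‖lam (fun i => ⌊(2 : ℝ) ^ (j : ℤ) * x i⌋)‖ ^ p)) ^ (1 / p) =
      ENNReal.ofReal (φ ((2 : ℝ) ^ (-ν))) *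
        ENNReal.ofReal ((2 : ℝ) ^ ((((ν : ℝ) - (j : ℝ))) * ((d : ℝ) / p))) *
        (∑' m : {m : Fin d → ℤ // dyadicCube d (j : ℤ) m ⊆ dyadicCube d ν k},
            ENNReal.ofReal (‖lam m.1‖ ^ p)) ^ (1 / p) := by
    intro ν hν k
    have hint : (∫⁻ x in dyadicCube d ν k,
        ENNReal.ofReal (‖lam (fun i => ⌊(2 : ℝ) ^ (j : ℤ) * x i⌋)‖ ^ p)) =
        (∑' m : {m : Fin d → ℤ // dyadicCube d (j : ℤ) m ⊆ dyadicCube d ν k},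
            ENNReal.ofReal (‖lam m.1‖ ^ p)) *
          ENNReal.ofReal ((2:ℝ) ^ (-(j:ℤ))) ^ d := by
      have hvol : ∀ m : Fin d → ℤ,
          ENNReal.ofReal (‖lam m‖ ^ p) *
            volume (dyadicCube d (j:ℤ) m ∩ dyadicCube d ν k) =
          Set.indicator {m' | dyadicCube d (j:ℤ) m' ⊆ dyadicCube d ν k}
            (fun m' => ENNReal.ofReal (‖lam m'‖ ^ p) *
              ENNReal.ofReal ((2:ℝ) ^ (-(j:ℤ))) ^ d) m := by
        intro m
        by_cases hsub : dyadicCube d (j:ℤ) m ⊆ dyadicCube d ν k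
        · rw [Set.indicator_of_mem
              (show m ∈ {m' | dyadicCube d (j:ℤ) m' ⊆ dyadicCube d ν k} from hsub),
            Set.inter_eq_left.2 hsub, volume_dyadicCube]
        · rw [Set.indicator_of_notMem
              (show m ∉ {m' | dyadicCube d (j:ℤ) m' ⊆ dyadicCube d ν k} from hsub)]
          have hempty : dyadicCube d (j:ℤ) m ∩ dyadicCube d ν k = ∅ :=
            Set.eq_empty_iff_forall_notMem.2 fun x hx =>
              hsub (dyadic_subset_of_mem hν hx.1 hx.2)
          rw [hempty]
          simp
      calc (∫⁻ x in dyadicCube d ν k,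
          ENNReal.ofReal (‖lam (fun i => ⌊(2 : ℝ) ^ (j : ℤ) * x i⌋)‖ ^ p))
          = ∑' m : Fin d → ℤ, ENNReal.ofReal (‖lam m‖ ^ p) *
              volume (dyadicCube d (j:ℤ) m ∩ dyadicCube d ν k) :=
            lintegral_step (j:ℤ) (fun m => ENNReal.ofReal (‖lam m‖ ^ p))
              (dyadicCube d ν k)
        _ = ∑' m : Fin d → ℤ,
              Set.indicator {m' | dyadicCube d (j:ℤ) m' ⊆ dyadicCube d ν k}
                (fun m' => ENNReal.ofReal (‖lam m'‖ ^ p) *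
                  ENNReal.ofReal ((2:ℝ) ^ (-(j:ℤ))) ^ d) m := tsum_congr hvol
        _ = ∑' m : {m : Fin d → ℤ // dyadicCube d (j : ℤ) m ⊆ dyadicCube d ν k},
              (ENNReal.ofReal (‖lam m.1‖ ^ p) *
                ENNReal.ofReal ((2:ℝ) ^ (-(j:ℤ))) ^ d) :=
            (tsum_subtype {m' | dyadicCube d (j:ℤ) m' ⊆ dyadicCube d ν k}
              (fun m' => ENNReal.ofReal (‖lam m'‖ ^ p) *
                ENNReal.ofReal ((2:ℝ) ^ (-(j:ℤ))) ^ d)).symm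
        _ = (∑' m : {m : Fin d → ℤ // dyadicCube d (j : ℤ) m ⊆ dyadicCube d ν k},
              ENNReal.ofReal (‖lam m.1‖ ^ p)) *
            ENNReal.ofReal ((2:ℝ) ^ (-(j:ℤ))) ^ d := ENNReal.tsum_mul_right
    have hcoef : ∀ S : ℝ≥0∞,
        (ENNReal.ofReal ((2:ℝ) ^ (-ν)) ^ d)⁻¹ *
          (S * ENNReal.ofReal ((2:ℝ) ^ (-(j:ℤ))) ^ d) =
        ENNReal.ofReal ((2:ℝ) ^ ((((ν:ℝ) - (j:ℝ))) * (d:ℝ))) * S := by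
      intro S
      rw [mul_comm S, ← mul_assoc]
      congr 1
      rw [← ENNReal.ofReal_pow (hVpos ν).le, ← ENNReal.ofReal_pow (hVpos (j:ℤ)).le,
        ← ENNReal.ofReal_inv_of_pos (by positivity), ← ENNReal.ofReal_mul (by positivity)]
      congr 1
      have e1 : ((2:ℝ) ^ (-ν)) ^ d = (2:ℝ) ^ ((-ν) * d) := by
        rw [zpow_mul, zpow_natCast]
      have e2 : ((2:ℝ) ^ (-(j:ℤ))) ^ d = (2:ℝ) ^ ((-(j:ℤ)) * d) := by
        rw [zpow_mul, zpow_natCast]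
      rw [e1, e2, ← zpow_neg, ← zpow_add₀ (by norm_num : (2:ℝ) ≠ 0),
        show -((-ν) * (d:ℤ)) + (-(j:ℤ)) * (d:ℤ) = (ν - (j:ℤ)) * (d:ℤ) by ring,
        ← Real.rpow_intCast 2 ((ν - (j:ℤ)) * (d:ℤ))]
      congr 1
      push_cast
      ring
    rw [hint, volume_dyadicCube, hcoef,
      ENNReal.mul_rpow_of_nonneg _ _ (by positivity : (0:ℝ) ≤ 1 / p),
      ENNReal.ofReal_rpow_of_pos (by positivity),
      ← Real.rpow_mul (by norm_num : (0:ℝ) ≤ 2),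
      show ((((ν:ℝ) - (j:ℝ))) * (d:ℝ)) * (1 / p) = (((ν:ℝ) - (j:ℝ))) * ((d:ℝ) / p) by ring,
      mul_assoc]
  refine le_antisymm (iSup_le fun ν => iSup_le fun k => ?_)
    (iSup_le fun ν => iSup_le fun hν => iSup_le fun k => ?_)
  · rcases le_or_gt ν (j : ℤ) with hν | hν
    · rw [key ν hν k]
      exact le_iSup_of_le ν (le_iSup_of_le hν (le_iSup_of_le k le_rfl))
    · -- ν > j : the cube Q_{ν,k} sits inside a single level-j cube
      set m₀ : Fin d → ℤ := fun i => ⌊(2:ℝ) ^ (j:ℤ) * ((2:ℝ) ^ (-ν) * k i)⌋ with hm₀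
      have hsub : dyadicCube d ν k ⊆ dyadicCube d (j:ℤ) m₀ := by
        intro x hx
        rw [mem_dyadicCube]
        intro i
        have hc : (fun i' => (2:ℝ) ^ (-ν) * k i') ∈ dyadicCube d ν k := corner_mem
        have h1 : ⌊(2:ℝ) ^ ν * x i⌋ = ⌊(2:ℝ) ^ ν * ((2:ℝ) ^ (-ν) * k i)⌋ :=
          (mem_dyadicCube.1 hx i).trans (mem_dyadicCube.1 hc i).symm
        exact floor_scale hν.le h1
      have hconst : ∀ x ∈ dyadicCube d ν k,
          ENNReal.ofReal (‖lam (fun i => ⌊(2:ℝ) ^ (j:ℤ) * x i⌋)‖ ^ p) =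
          ENNReal.ofReal (‖lam m₀‖ ^ p) := by
        intro x hx
        have : (fun i => ⌊(2:ℝ) ^ (j:ℤ) * x i⌋) = m₀ :=
          funext fun i => mem_dyadicCube.1 (hsub hx) i
        rw [this]
      have hint2 : (∫⁻ x in dyadicCube d ν k,
          ENNReal.ofReal (‖lam (fun i => ⌊(2:ℝ) ^ (j:ℤ) * x i⌋)‖ ^ p)) =
          ENNReal.ofReal (‖lam m₀‖ ^ p) * volume (dyadicCube d ν k) := by
        rw [setLIntegral_congr_fun (measurableSet_dyadicCube d ν k) hconst,
          lintegral_const, Measure.restrict_apply_univ]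
      have hsimp : (volume (dyadicCube d ν k))⁻¹ *
          (ENNReal.ofReal (‖lam m₀‖ ^ p) * volume (dyadicCube d ν k)) =
          ENNReal.ofReal (‖lam m₀‖ ^ p) := by
        rw [mul_comm (ENNReal.ofReal _), ← mul_assoc,
          ENNReal.inv_mul_cancel (hV0 ν k) (hVtop ν k), one_mul]
      rw [hint2, hsimp]
      refine le_trans ?_ (le_iSup_of_le (j:ℤ) (le_iSup_of_le le_rfl (le_iSup_of_le m₀ le_rfl)))
      have hexp : ((((j:ℤ):ℝ) - (j:ℝ))) * ((d:ℝ) / p) = 0 := by push_cast; ring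
      rw [hexp, Real.rpow_zero, ENNReal.ofReal_one, mul_one]
      have h2ν : (2:ℝ) ^ (-ν) ≤ (2:ℝ) ^ (-(j:ℤ)) :=
        zpow_le_zpow_right₀ (by norm_num : (1:ℝ) ≤ 2) (by omega)
      have hφν : ENNReal.ofReal (φ ((2:ℝ) ^ (-ν))) ≤ ENNReal.ofReal (φ ((2:ℝ) ^ (-(j:ℤ)))) :=
        ENNReal.ofReal_le_ofReal
          (hmono (Set.mem_Ioi.2 (hVpos ν)) (Set.mem_Ioi.2 (hVpos (j:ℤ))) h2ν)
      have hle : ENNReal.ofReal (‖lam m₀‖ ^ p) ≤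
          ∑' m : {m : Fin d → ℤ // dyadicCube d (j : ℤ) m ⊆ dyadicCube d (j:ℤ) m₀},
            ENNReal.ofReal (‖lam m.1‖ ^ p) :=
        ENNReal.le_tsum
          (⟨m₀, subset_rfl⟩ : {m : Fin d → ℤ // dyadicCube d (j : ℤ) m ⊆ dyadicCube d (j:ℤ) m₀})
      exact mul_le_mul' hφν (ENNReal.rpow_le_rpow hle (by positivity))
  · rw [← key ν hν k]
    exact le_iSup_of_le ν (le_iSup_of_le k le_rfl)
end

section
/- Let 0 < p₁ < p₂ < ∞, ρ = p₁/p₂, j ∈ ℕ₀, φ₁ ∈ G_{p₁}, φ₂ nondecreasing, and α_j = sup_{ν ≤ j} φ₂(2^(-ν))/φ₁(2^(-ν))^ρ < ∞. Then for every sequence (λ_{j,m})_m: sup_{ν ≤ j, k} φ₂(2^(-ν))·2^((ν-j)d/p₂)·(Σ_{Q_{j,m} ⊂ Q_{ν,k}} |λ_{j,m}|^{p₂})^(1/p₂) ≤ α_j · φ₁(2^(-j))^{ρ-1} · sup_{ν ≤ j, k} φ₁(2^(-ν))·2^((ν-j)d/p₁)·(Σ_{Q_{j,m} ⊂ Q_{ν,k}}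 |λ_{j,m}|^{p₁})^(1/p₁). -/
open MeasureTheory ENNReal NNReal

set_option maxHeartbeats 1600000

/-- The level-`j` building block of the generalised Besov-Morrey sequence quasi-norm:
`sup_{ν ≤ j, k ∈ ℤ^d} φ(2^{-ν})·2^{(ν-j)d/p}·(Σ_{m : Q_{j,m} ⊆ Q_{ν,k}} |λ_m|^p)^{1/p}`. -/
noncomputable def levelNorm (d : ℕ) (φ : ℝ → ℝ) (p : ℝ) (j : ℕ)
    (lam : (Fin d → ℤ) → ℂ) : ℝ≥0∞ :=
  ⨆ (ν : ℤ) (_ : ν ≤ (j : ℤ)) (k : Fin d → ℤ),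
    ENNReal.ofReal (φ ((2 : ℝ) ^ (-ν))) *
      ENNReal.ofReal ((2 : ℝ) ^ (((ν : ℝ) - (j : ℝ)) * ((d : ℝ) / p))) *
      (∑' m : {m : Fin d → ℤ // dyadicCube d (j : ℤ) m ⊆ dyadicCube d ν k},
          ENNReal.ofReal (‖lam m.1‖ ^ p)) ^ (1 / p)

/-- The quasi-norm of the generalised Besov-Morrey sequence space `n^s_{φ,p,q}`:
`(Σ_j 2^{jsq}·[levelNorm_j]^q)^{1/q}`, with the sup modification for `q = ∞`. -/
noncomputable def bmNorm (d : ℕ) (φ : ℝ → ℝ) (s p : ℝ) (q : ℝ≥0∞)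
    (lam : ℕ → (Fin d → ℤ) → ℂ) : ℝ≥0∞ :=
  if q = ∞ then ⨆ j : ℕ, ENNReal.ofReal ((2 : ℝ) ^ ((j : ℝ) * s)) * levelNorm d φ p j (lam j)
  else (∑' j : ℕ,
      (ENNReal.ofReal ((2 : ℝ) ^ ((j : ℝ) * s)) * levelNorm d φ p j (lam j)) ^ q.toReal) ^
    (1 / q.toReal)

/-- Membership of `φ` in the class `G_p`: `φ : (0,∞) → [0,∞)` is nondecreasing and
`t ↦ φ(t)·t^{-d/p}` is nonincreasing. -/
def memG (d : ℕ) (p : ℝ) (φ : ℝ → ℝ) : Prop :=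
  (∀ t, 0 < t → 0 ≤ φ t) ∧ MonotoneOn φ (Set.Ioi 0) ∧
    AntitoneOn (fun t => φ t * t ^ (-(d : ℝ) / p)) (Set.Ioi 0)

section helpers

variable {d : ℕ}

lemma block_le_levelNorm (φ : ℝ → ℝ) (p : ℝ) (j : ℕ) (lam : (Fin d → ℤ) → ℂ)
    {ν : ℤ} (hν : ν ≤ (j : ℤ)) (k : Fin d → ℤ) :
    ENNReal.ofReal (φ ((2 : ℝ) ^ (-ν))) *
      ENNReal.ofReal ((2 : ℝ) ^ (((ν : ℝ) - (j : ℝ)) * ((d : ℝ) / p))) *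
      (∑' m : {m : Fin d → ℤ // dyadicCube d (j : ℤ) m ⊆ dyadicCube d ν k},
          ENNReal.ofReal (‖lam m.1‖ ^ p)) ^ (1 / p) ≤ levelNorm d φ p j lam := by
  rw [levelNorm]
  refine le_iSup_of_le ν (le_iSup_of_le hν ?_)
  apply le_iSup _ k

lemma abs_le_levelNorm {p : ℝ} (hp : 0 < p) (φ : ℝ → ℝ) (j : ℕ)
    (lam : (Fin d → ℤ) → ℂ) (m : Fin d → ℤ) :
    ENNReal.ofReal (φ ((2 : ℝ) ^ (-(j : ℤ)))) * ENNReal.ofReal (‖lam m‖) ≤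
      levelNorm d φ p j lam := by
  have h := block_le_levelNorm (d := d) φ p j lam (le_refl (j : ℤ)) m
  have h2 : ((2 : ℝ) ^ (((((j : ℕ) : ℤ) : ℝ) - ((j : ℕ) : ℝ)) * ((d : ℝ) / p))) = 1 := by
    push_cast
    rw [sub_self, zero_mul, Real.rpow_zero]
  rw [h2, ENNReal.ofReal_one, mul_one] at h
  refine le_trans ?_ h
  refine mul_le_mul_right ?_ _
  have habs : (0:ℝ) ≤ ‖lam m‖ := norm_nonneg _
  have hle : ENNReal.ofReal (‖lam m‖ ^ p) ≤
      ∑' m' : {m' : Fin d → ℤ // dyadicCube d (j : ℤ) m' ⊆ dyadicCube d (j : ℤ) m},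
        ENNReal.ofReal (‖lam m'.1‖ ^ p) :=
    ENNReal.le_tsum (⟨m, subset_rfl⟩ :
      {m' : Fin d → ℤ // dyadicCube d (j : ℤ) m' ⊆ dyadicCube d (j : ℤ) m})
  have key := ENNReal.rpow_le_rpow hle (by positivity : (0:ℝ) ≤ 1 / p)
  rwa [← ENNReal.ofReal_rpow_of_nonneg habs hp.le,
    ← ENNReal.rpow_mul, mul_one_div, div_self hp.ne', ENNReal.rpow_one] at key

end helpers

/-- For `0 < p₁ < p₂ < ∞`, `ρ = p₁/p₂`, `φ₁ ∈ G_{p₁}`, `φ₂` nondecreasing,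
a fixed level `j`, and `α_j = sup_{ν ≤ j} φ₂(2^{-ν})/φ₁(2^{-ν})^ρ` finite, the level-`j`
Morrey sequence quasi-norm with data `(φ₂, p₂)` is at most
`α_j · φ₁(2^{-j})^{ρ-1}` times the one with data `(φ₁, p₁)`. -/
theorem level_norm_estimate_p1_lt_p2 (d : ℕ) (hd : 1 ≤ d) (p₁ p₂ : ℝ)
    (hp₁ : 0 < p₁) (hp₁₂ : p₁ < p₂) (φ₁ φ₂ : ℝ → ℝ)
    (hφ₁ : memG d p₁ φ₁)
    (hφ₂0 : ∀ t, 0 < t → 0 ≤ φ₂ t) (hφ₂ : MonotoneOn φ₂ (Set.Ioi 0))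
    (j : ℕ)
    (hα : (⨆ (ν : ℤ) (_ : ν ≤ (j : ℤ)),
        ENNReal.ofReal (φ₂ ((2 : ℝ) ^ (-ν))) /
          ENNReal.ofReal (φ₁ ((2 : ℝ) ^ (-ν)) ^ (p₁ / p₂))) < ∞)
    (lam : (Fin d → ℤ) → ℂ) :
    levelNorm d φ₂ p₂ j lam ≤
      (⨆ (ν : ℤ) (_ : ν ≤ (j : ℤ)),
        ENNReal.ofReal (φ₂ ((2 : ℝ) ^ (-ν))) /
          ENNReal.ofReal (φ₁ ((2 : ℝ) ^ (-ν)) ^ (p₁ / p₂))) *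
      ENNReal.ofReal (φ₁ ((2 : ℝ) ^ (-(j : ℤ))) ^ (p₁ / p₂ - 1)) *
      levelNorm d φ₁ p₁ j lam := by
  have hp₂ : 0 < p₂ := hp₁.trans hp₁₂
  set ρ := p₁ / p₂ with hρdef
  have hρ0 : 0 < ρ := div_pos hp₁ hp₂
  have hρ1 : ρ < 1 := (div_lt_one hp₂).2 hp₁₂
  set α := (⨆ (ν : ℤ) (_ : ν ≤ (j : ℤ)),
      ENNReal.ofReal (φ₂ ((2 : ℝ) ^ (-ν))) /
        ENNReal.ofReal (φ₁ ((2 : ℝ) ^ (-ν)) ^ ρ)) with hαdef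
  set A := levelNorm d φ₁ p₁ j lam with hAdef
  set C := ENNReal.ofReal (φ₁ ((2 : ℝ) ^ (-(j : ℤ))) ^ (ρ - 1)) with hCdef
  rw [levelNorm]
  refine iSup_le fun ν => iSup_le fun hν => iSup_le fun k => ?_
  have h2j : (0:ℝ) < (2 : ℝ) ^ (-(j : ℤ)) := by positivity
  have h2ν : (0:ℝ) < (2 : ℝ) ^ (-ν) := by positivity
  have hle : (2 : ℝ) ^ (-(j : ℤ)) ≤ (2 : ℝ) ^ (-ν) :=
    zpow_le_zpow_right₀ one_le_two (by omega)
  rcases le_or_gt (φ₁ ((2 : ℝ) ^ (-(j : ℤ)))) 0 with hj0 | hj0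
  · -- degenerate case: φ₁(2^{-j}) = 0 forces φ₂(2^{-ν}) = 0
    have hj0' : φ₁ ((2 : ℝ) ^ (-(j : ℤ))) = 0 := le_antisymm hj0 (hφ₁.1 _ h2j)
    have hφ1ν : φ₁ ((2 : ℝ) ^ (-ν)) = 0 := by
      have hanti := hφ₁.2.2 h2j h2ν hle
      simp only [hj0', zero_mul] at hanti
      have hpos : (0:ℝ) < ((2 : ℝ) ^ (-ν)) ^ (-(d : ℝ) / p₁) := Real.rpow_pos_of_pos h2ν _
      have hnn : 0 ≤ φ₁ ((2 : ℝ) ^ (-ν)) := hφ₁.1 _ h2ν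
      nlinarith
    have hφ2ν : φ₂ ((2 : ℝ) ^ (-ν)) ≤ 0 := by
      by_contra hcon
      push_neg at hcon
      have hg0 : ENNReal.ofReal (φ₂ ((2 : ℝ) ^ (-ν))) ≠ 0 :=
        (ENNReal.ofReal_pos.2 hcon).ne'
      have hterm : (⊤ : ℝ≥0∞) ≤ α := by
        refine le_iSup_of_le ν (le_iSup_of_le hν (le_of_eq ?_))
        rw [hφ1ν, Real.zero_rpow hρ0.ne', ENNReal.ofReal_zero, ENNReal.div_zero hg0]
      exact absurd (top_le_iff.mp hterm) hα.ne
    have hg : ENNReal.ofReal (φ₂ ((2 : ℝ) ^ (-ν))) = 0 := ENNReal.ofReal_eq_zero.2 hφ2ν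
    rw [hg, zero_mul, zero_mul]
    exact zero_le
  · -- main case : φ₁(2^{-j}) > 0
    have hφ1ν : 0 < φ₁ ((2 : ℝ) ^ (-ν)) :=
      lt_of_lt_of_le hj0 (hφ₁.2.1 h2j h2ν hle)
    set a := ENNReal.ofReal (φ₁ ((2 : ℝ) ^ (-(j : ℤ)))) with hadef
    set fν := ENNReal.ofReal (φ₁ ((2 : ℝ) ^ (-ν))) with hfdef
    set gν := ENNReal.ofReal (φ₂ ((2 : ℝ) ^ (-ν))) with hgdef
    set e₁ := ENNReal.ofReal ((2 : ℝ) ^ (((ν : ℝ) - (j : ℝ)) * ((d : ℝ) / p₁))) with he1def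
    set e₂ := ENNReal.ofReal ((2 : ℝ) ^ (((ν : ℝ) - (j : ℝ)) * ((d : ℝ) / p₂))) with he2def
    set B₁ := ∑' m : {m : Fin d → ℤ // dyadicCube d (j : ℤ) m ⊆ dyadicCube d ν k},
        ENNReal.ofReal (‖lam m.1‖ ^ p₁) with hB1def
    set B₂ := ∑' m : {m : Fin d → ℤ // dyadicCube d (j : ℤ) m ⊆ dyadicCube d ν k},
        ENNReal.ofReal (‖lam m.1‖ ^ p₂) with hB2def
    have ha0 : a ≠ 0 := (ENNReal.ofReal_pos.2 hj0).ne'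
    have hat : a ≠ ∞ := ENNReal.ofReal_ne_top
    have hf0 : fν ≠ 0 := (ENNReal.ofReal_pos.2 hφ1ν).ne'
    have hft : fν ≠ ∞ := ENNReal.ofReal_ne_top
    have he10 : e₁ ≠ 0 := (ENNReal.ofReal_pos.2 (by positivity)).ne'
    have he1t : e₁ ≠ ∞ := ENNReal.ofReal_ne_top
    have he20 : e₂ ≠ 0 := (ENNReal.ofReal_pos.2 (by positivity)).ne'
    have he2t : e₂ ≠ ∞ := ENNReal.ofReal_ne_top
    have key1 : ∀ m, a * ENNReal.ofReal (‖lam m‖) ≤ A :=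
      fun m => abs_le_levelNorm hp₁ φ₁ j lam m
    have key2 : fν * e₁ * B₁ ^ (1 / p₁) ≤ A := block_le_levelNorm φ₁ p₁ j lam hν k
    rcases eq_or_ne A 0 with hA0 | hA0
    · -- A = 0 : all coefficients vanish
      have hB2 : B₂ = 0 := by
        rw [hB2def, ENNReal.tsum_eq_zero]
        intro m
        have h1 := key1 m.1
        rw [hA0, le_zero_iff, mul_eq_zero] at h1
        have habs0 : ‖lam m.1‖ = 0 := by
          rcases h1 with h1 | h1
          · exact absurd h1 ha0
          · exact le_antisymm (ENNReal.ofReal_eq_zero.1 h1) (norm_nonneg _)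
        rw [habs0, Real.zero_rpow hp₂.ne', ENNReal.ofReal_zero]
      rw [hB2, ENNReal.zero_rpow_of_pos (by positivity), mul_zero]
      exact zero_le
    rcases eq_or_ne A ∞ with hAt | hAt
    · -- A = ∞
      rcases eq_or_ne gν 0 with hg0 | hg0
      · rw [hg0, zero_mul, zero_mul]
        exact zero_le
      · have hα0 : α ≠ 0 := by
          have hterm : gν / ENNReal.ofReal (φ₁ ((2 : ℝ) ^ (-ν)) ^ ρ) ≤ α :=
            le_iSup_of_le ν (le_iSup_of_le hν le_rfl)
          have hpos : 0 < gν / ENNReal.ofReal (φ₁ ((2 : ℝ) ^ (-ν)) ^ ρ) :=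
            ENNReal.div_pos hg0 ENNReal.ofReal_ne_top
          exact (hpos.trans_le hterm).ne'
        have hC0 : C ≠ 0 :=
          (ENNReal.ofReal_pos.2 (Real.rpow_pos_of_pos hj0 _)).ne'
        rw [hAt, ENNReal.mul_top (mul_ne_zero hα0 hC0)]
        exact le_top
    · -- 0 < A < ∞ : the main computation
      have hfρ0 : fν ^ ρ ≠ 0 := (ENNReal.rpow_pos (ENNReal.ofReal_pos.2 hφ1ν) hft).ne'
      have hfρt : fν ^ ρ ≠ ∞ := ENNReal.rpow_ne_top_of_nonneg hρ0.le hft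
      have hx : ∀ m : Fin d → ℤ, ENNReal.ofReal (‖lam m‖) ≤ A / a := by
        intro m
        rw [ENNReal.le_div_iff_mul_le (Or.inl ha0) (Or.inl hat), mul_comm]
        exact key1 m
      have step1 : B₂ ≤ (A / a) ^ (p₂ - p₁) * B₁ := by
        rw [hB1def, hB2def, ← ENNReal.tsum_mul_left]
        refine ENNReal.tsum_le_tsum fun m => ?_
        have habs : (0:ℝ) ≤ ‖lam m.1‖ := norm_nonneg _
        calc ENNReal.ofReal (‖lam m.1‖ ^ p₂)
            = ENNReal.ofReal (‖lam m.1‖) ^ p₂ :=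
              (ENNReal.ofReal_rpow_of_nonneg habs hp₂.le).symm
          _ = ENNReal.ofReal (‖lam m.1‖) ^ (p₂ - p₁) *
                ENNReal.ofReal (‖lam m.1‖) ^ p₁ := by
              rw [← ENNReal.rpow_add_of_nonneg _ _ (sub_nonneg.2 hp₁₂.le) hp₁.le,
                sub_add_cancel]
          _ ≤ (A / a) ^ (p₂ - p₁) * ENNReal.ofReal (‖lam m.1‖) ^ p₁ :=
              mul_le_mul_left (ENNReal.rpow_le_rpow (hx m.1) (sub_nonneg.2 hp₁₂.le)) _
          _ = (A / a) ^ (p₂ - p₁) * ENNReal.ofReal (‖lam m.1‖ ^ p₁) := by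
              rw [ENNReal.ofReal_rpow_of_nonneg habs hp₁.le]
      have step2 : B₂ ^ (1 / p₂) ≤ (A / a) ^ (1 - ρ) * (B₁ ^ (1 / p₁)) ^ ρ := by
        calc B₂ ^ (1 / p₂) ≤ ((A / a) ^ (p₂ - p₁) * B₁) ^ (1 / p₂) :=
              ENNReal.rpow_le_rpow step1 (by positivity)
          _ = ((A / a) ^ (p₂ - p₁)) ^ (1 / p₂) * B₁ ^ (1 / p₂) :=
              ENNReal.mul_rpow_of_nonneg _ _ (by positivity)
          _ = (A / a) ^ (1 - ρ) * (B₁ ^ (1 / p₁)) ^ ρ := by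
              rw [← ENNReal.rpow_mul, ← ENNReal.rpow_mul]
              congr 1
              · congr 1
                rw [hρdef]
                field_simp
              · congr 1
                rw [hρdef]
                field_simp
      have step3 : B₁ ^ (1 / p₁) ≤ A / (fν * e₁) := by
        rw [ENNReal.le_div_iff_mul_le (Or.inl (mul_ne_zero hf0 he10))
          (Or.inl (ENNReal.mul_ne_top hft he1t)), mul_comm]
        exact key2
      have hFeq : ENNReal.ofReal (φ₁ ((2 : ℝ) ^ (-ν)) ^ ρ) = fν ^ ρ :=
        (ENNReal.ofReal_rpow_of_pos hφ1ν).symm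
      have hg : gν ≤ α * fν ^ ρ := by
        have hterm : gν / ENNReal.ofReal (φ₁ ((2 : ℝ) ^ (-ν)) ^ ρ) ≤ α :=
          le_iSup_of_le ν (le_iSup_of_le hν le_rfl)
        rw [hFeq] at hterm
        exact (ENNReal.div_le_iff_le_mul (Or.inl hfρ0) (Or.inl hfρt)).1 hterm
      have hCeq : C = (a ^ (1 - ρ))⁻¹ := by
        rw [hCdef, ← ENNReal.ofReal_rpow_of_pos hj0, show ρ - 1 = -(1 - ρ) by ring,
          ENNReal.rpow_neg]
      have hee : e₁ ^ ρ = e₂ := by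
        rw [he1def, he2def, ENNReal.ofReal_rpow_of_pos (by positivity)]
        congr 1
        rw [← Real.rpow_mul (by norm_num : (0:ℝ) ≤ 2)]
        congr 1
        rw [hρdef]
        field_simp
      have hcan : (fν ^ ρ * e₂) * (fν ^ ρ * e₂)⁻¹ = 1 :=
        ENNReal.mul_inv_cancel (mul_ne_zero hfρ0 he20) (ENNReal.mul_ne_top hfρt he2t)
      calc gν * e₂ * B₂ ^ (1 / p₂)
          ≤ gν * e₂ * ((A / a) ^ (1 - ρ) * (A / (fν * e₁)) ^ ρ) := by
            refine mul_le_mul_right (step2.trans ?_) _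
            exact mul_le_mul_right (ENNReal.rpow_le_rpow step3 hρ0.le) _
        _ ≤ (α * fν ^ ρ) * e₂ * ((A / a) ^ (1 - ρ) * (A / (fν * e₁)) ^ ρ) := by
            gcongr
        _ = α * C * A := by
            rw [ENNReal.div_rpow_of_nonneg _ _ (by linarith : (0:ℝ) ≤ 1 - ρ),
              ENNReal.div_rpow_of_nonneg _ _ hρ0.le,
              ENNReal.mul_rpow_of_nonneg _ _ hρ0.le, hee,
              div_eq_mul_inv, div_eq_mul_inv, hCeq]
            calc α * fν ^ ρ * e₂ * (A ^ (1 - ρ) * (a ^ (1 - ρ))⁻¹ *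
                  (A ^ ρ * (fν ^ ρ * e₂)⁻¹))
                = ((fν ^ ρ * e₂) * (fν ^ ρ * e₂)⁻¹) *
                    (α * (a ^ (1 - ρ))⁻¹ * (A ^ (1 - ρ) * A ^ ρ)) := by ring
              _ = α * (a ^ (1 - ρ))⁻¹ * A := by
                  rw [hcan, one_mul, ← ENNReal.rpow_add _ _ hA0 hAt]
                  norm_num
end

section
/- Let s₁, s₂ ∈ ℝ, 0 < p₁, p₂ < ∞, 0 < q₁, q₂ ≤ ∞, φᵢ ∈ G_{pᵢ} with φ₁(1) = φ₂(1) = 1, ρ = min(1, p₁/p₂), and α_j = sup_{ν ≤ j} φ₂(2^(-ν))/φ₁(2^(-ν))^ρ. If sup_{ν ≤ 0} φ₂(2^(-ν))/φ₁(2^(-ν))^ρ < ∞ and the sequence (2^{j(s₂-s₁)}·α_j·φ₁(2^{-j})^{ρ-1})_j belongs to ℓ_{q*} with 1/q* = (1/q₂ - 1/q₁)₊, then the identity map is a bounded embedding n^{s₁}_{φ₁,p₁,q₁} ↪ n^{s₂}_{φ₂,p₂,q₂}. -/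
open MeasureTheory ENNReal NNReal

-- tsum Hölder for ENNReal over any index type
lemma tsum_holder {ι : Type*} (f g : ι → ℝ≥0∞) {p q : ℝ} (hpq : p.HolderConjugate q) :
    ∑' i, f i * g i ≤ (∑' i, f i ^ p) ^ (1/p) * (∑' i, g i ^ q) ^ (1/q) := by
  rw [ENNReal.tsum_eq_iSup_sum]
  refine iSup_le fun s => le_trans (ENNReal.inner_le_Lp_mul_Lq s f g hpq) ?_
  exact mul_le_mul'
    (ENNReal.rpow_le_rpow (ENNReal.sum_le_tsum s) hpq.one_div_pos.le)
    (ENNReal.rpow_le_rpow (ENNReal.sum_le_tsum s) hpq.symm.one_div_pos.le)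

-- single term ≤ lq norm
lemma le_lq_norm {ι : Type*} (f : ι → ℝ≥0∞) {a : ℝ} (ha : 0 < a) (i : ι) :
    f i ≤ (∑' j, f j ^ a) ^ (1/a) := by
  have h1 : f i ^ a ≤ ∑' j, f j ^ a := ENNReal.le_tsum i
  have := ENNReal.rpow_le_rpow h1 (by positivity : (0:ℝ) ≤ 1/a)
  rwa [← ENNReal.rpow_mul, mul_one_div, div_self ha.ne', ENNReal.rpow_one] at this

-- lq-norm monotonicity
lemma lq_mono {ι : Type*} (f : ι → ℝ≥0∞) {a b : ℝ} (ha : 0 < a) (hab : a ≤ b) :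
    (∑' i, f i ^ b) ^ (1/b) ≤ (∑' i, f i ^ a) ^ (1/a) := by
  have hb : 0 < b := ha.trans_le hab
  set S := ∑' i, f i ^ a with hS
  have key : ∑' i, f i ^ b ≤ S ^ (b/a) := by
    have h1 : ∀ i, f i ^ b ≤ f i ^ a * S ^ ((b-a)/a) := by
      intro i
      have : f i ^ b = f i ^ a * f i ^ (b - a) := by
        rw [← ENNReal.rpow_add_of_nonneg _ _ ha.le (by linarith)]
        ring_nf
      rw [this]
      gcongr
      have h2 : f i ^ (b-a) = (f i ^ a) ^ ((b-a)/a) := by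
        rw [← ENNReal.rpow_mul]
        congr 1
        field_simp
      rw [h2]
      exact ENNReal.rpow_le_rpow (ENNReal.le_tsum i) (div_nonneg (by linarith) ha.le)
    calc ∑' i, f i ^ b ≤ ∑' i, f i ^ a * S ^ ((b-a)/a) := ENNReal.tsum_le_tsum h1
      _ = S * S ^ ((b-a)/a) := by rw [ENNReal.tsum_mul_right]
      _ = S ^ (1 + (b-a)/a) := by
          rw [ENNReal.rpow_add_of_nonneg _ _ zero_le_one (div_nonneg (by linarith) ha.le),
            ENNReal.rpow_one]
      _ = S ^ (b/a) := by congr 1; field_simp; ring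
  calc (∑' i, f i ^ b) ^ (1/b) ≤ (S ^ (b/a)) ^ (1/b) :=
        ENNReal.rpow_le_rpow key (by positivity)
    _ = S ^ (1/a) := by
        rw [← ENNReal.rpow_mul]
        congr 1
        field_simp

-- power mean over tsum: count ≤ N
lemma tsum_power_mean {ι : Type*} (a : ι → ℝ≥0∞) {b c : ℝ} (hb : 0 < b) (hbc : b ≤ c) :
    (∑' i, a i ^ b) ^ (1/b) ≤
      (∑' _ : ι, (1:ℝ≥0∞)) ^ (1/b - 1/c) * (∑' i, a i ^ c) ^ (1/c) := by
  have hc : 0 < c := hb.trans_le hbc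
  rcases eq_or_lt_of_le hbc with rfl | hlt
  · simp
  · have hr : 1 < c / b := (one_lt_div hb).2 hlt
    have hpq : (c/b).HolderConjugate ((c/b)/(c/b - 1)) := .conjExponent hr
    have key : ∑' i, a i ^ b ≤
        (∑' i, a i ^ c) ^ (b/c) * (∑' _ : ι, (1:ℝ≥0∞)) ^ (1 - b/c) := by
      have h0 := tsum_holder (fun i => a i ^ b) (fun _ => (1:ℝ≥0∞)) hpq
      simp only [mul_one, ENNReal.one_rpow] at h0
      have e1 : ∀ i, (a i ^ b) ^ (c/b) = a i ^ c := by
        intro i; rw [← ENNReal.rpow_mul]; congr 1; field_simp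
      have e2 : (1:ℝ)/(c/b) = b/c := by field_simp
      have e3 : (1:ℝ)/((c/b)/(c/b-1)) = 1 - b/c := by
        rw [one_div_div]; field_simp
      rw [e2, e3] at h0
      simp only [e1] at h0
      exact h0
    calc (∑' i, a i ^ b) ^ (1/b)
        ≤ ((∑' i, a i ^ c) ^ (b/c) * (∑' _ : ι, (1:ℝ≥0∞)) ^ (1 - b/c)) ^ (1/b) :=
          ENNReal.rpow_le_rpow key (by positivity)
      _ = (∑' _ : ι, (1:ℝ≥0∞)) ^ (1/b - 1/c) * (∑' i, a i ^ c) ^ (1/c) := by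
          rw [ENNReal.mul_rpow_of_nonneg _ _ (by positivity), ← ENNReal.rpow_mul,
            ← ENNReal.rpow_mul, mul_comm]
          have e4 : (1 - b/c) * (1/b) = 1/b - 1/c := by
            field_simp
          have e5 : (b/c) * (1/b) = 1/c := by
            field_simp
          rw [e4, e5]


lemma memG_pos {d : ℕ} {p : ℝ} {φ : ℝ → ℝ} (h : memG d p φ) (h1 : φ 1 = 1)
    {t : ℝ} (ht : 0 < t) : 0 < φ t := by
  rcases le_total t 1 with h' | h'
  · have ha := h.2.2 (Set.mem_Ioi.2 ht) (Set.mem_Ioi.2 one_pos) h'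
    simp only [Real.one_rpow, h1, one_mul] at ha
    nlinarith [Real.rpow_pos_of_pos ht (-(d:ℝ)/p), ha]
  · have := h.2.1 (Set.mem_Ioi.2 one_pos) (Set.mem_Ioi.2 (by linarith : (0:ℝ) < t)) h'
    linarith [h1 ▸ this]

lemma mem_dyadicCube_corner (d : ℕ) (j : ℤ) (m : Fin d → ℤ) :
    (fun i => (2:ℝ)^(-j) * (m i : ℝ)) ∈ dyadicCube d j m := by
  intro i
  refine ⟨le_refl _, ?_⟩
  have h2 : (0:ℝ) < (2:ℝ)^(-j) := by positivity
  show (2:ℝ)^(-j) * (m i : ℝ) < (2:ℝ)^(-j) * ((m i : ℝ) + 1)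
  have : (m i : ℝ) < (m i : ℝ) + 1 := by linarith
  nlinarith

lemma cube_subset_bounds {d : ℕ} {j ν : ℤ} (hν : ν ≤ j) {m k : Fin d → ℤ}
    (h : dyadicCube d j m ⊆ dyadicCube d ν k) (i : Fin d) :
    2^(j-ν).toNat * k i ≤ m i ∧ m i < 2^(j-ν).toNat * (k i + 1) := by
  have hx := h (mem_dyadicCube_corner d j m) i
  have h2 : (0:ℝ) < (2:ℝ)^(-j) := by positivity
  have hn : ((2:ℝ))^((j-ν).toNat : ℕ) * (2:ℝ)^(-j) = (2:ℝ)^(-ν) := by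
    rw [← zpow_natCast, Int.toNat_of_nonneg (by omega : (0:ℤ) ≤ j - ν),
      ← zpow_add₀ (two_ne_zero) (j - ν) (-j)]
    congr 1
    ring
  constructor
  · have h1 : (2:ℝ)^(-ν) * (k i : ℝ) ≤ (2:ℝ)^(-j) * (m i : ℝ) := hx.1
    rw [← hn] at h1
    have : ((2:ℤ)^(j-ν).toNat * k i : ℝ) ≤ (m i : ℝ) := by
      have := le_of_mul_le_mul_left (by nlinarith : (2:ℝ)^(-j) * ((2:ℝ)^((j-ν).toNat : ℕ) * (k i : ℝ)) ≤ (2:ℝ)^(-j) * (m i : ℝ)) h2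
      push_cast
      linarith
    exact_mod_cast this
  · have h1 : (2:ℝ)^(-j) * (m i : ℝ) < (2:ℝ)^(-ν) * ((k i : ℝ) + 1) := hx.2
    rw [← hn] at h1
    have : (m i : ℝ) < ((2:ℤ)^(j-ν).toNat * (k i + 1) : ℝ) := by
      have := lt_of_mul_lt_mul_left (by nlinarith : (2:ℝ)^(-j) * (m i : ℝ) < (2:ℝ)^(-j) * ((2:ℝ)^((j-ν).toNat : ℕ) * ((k i : ℝ) + 1))) h2.le
      push_cast
      linarith
    exact_mod_cast this

lemma tsum_one_le_card {d : ℕ} {j ν : ℤ} (hν : ν ≤ j) (k : Fin d → ℤ) :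
    (∑' _ : {m : Fin d → ℤ // dyadicCube d j m ⊆ dyadicCube d ν k}, (1:ℝ≥0∞))
      ≤ (2:ℝ≥0∞) ^ (((j:ℝ) - (ν:ℝ)) * d) := by
  classical
  set n := (j-ν).toNat with hn
  set F : Finset (Fin d → ℤ) :=
    Fintype.piFinset (fun i => Finset.Icc (2^n * k i) (2^n * (k i + 1) - 1)) with hF
  have hsub : ∀ m : Fin d → ℤ, dyadicCube d j m ⊆ dyadicCube d ν k → m ∈ F := by
    intro m hm
    rw [hF, Fintype.mem_piFinset]
    intro i
    have hb := cube_subset_bounds hν hm i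
    rw [← hn] at hb
    rw [Finset.mem_Icc]
    omega
  have hcard : F.card = 2^(n*d) := by
    rw [hF, Fintype.card_piFinset]
    have : ∀ i : Fin d, (Finset.Icc (2^n * k i) (2^n * (k i + 1) - 1)).card = 2^n := by
      intro i
      rw [Int.card_Icc]
      have e : (2:ℤ)^n * (k i + 1) - 1 + 1 - 2^n * k i = ((2^n : ℕ) : ℤ) := by push_cast; ring
      rw [e, Int.toNat_natCast]
    simp [this, Finset.prod_const, pow_mul]
  have h1 : (∑' _ : {m : Fin d → ℤ // dyadicCube d j m ⊆ dyadicCube d ν k}, (1:ℝ≥0∞))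
      = ∑' m : (Fin d → ℤ), Set.indicator {m | dyadicCube d j m ⊆ dyadicCube d ν k}
          (fun _ => (1:ℝ≥0∞)) m :=
    tsum_subtype {m | dyadicCube d j m ⊆ dyadicCube d ν k} (fun _ => (1:ℝ≥0∞))
  rw [h1]
  have h2 : ∑' m : (Fin d → ℤ), Set.indicator {m | dyadicCube d j m ⊆ dyadicCube d ν k}
        (fun _ => (1:ℝ≥0∞)) m ≤ ∑' m : (Fin d → ℤ), Set.indicator ↑F (fun _ => (1:ℝ≥0∞)) m := by
    refine ENNReal.tsum_le_tsum fun m => ?_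
    exact Set.indicator_le_indicator_of_subset (fun m hm => hsub m hm) (fun _ => zero_le) m
  refine h2.trans ?_
  rw [tsum_eq_sum (s := F) (fun b hb => Set.indicator_of_notMem (by simpa using hb) _)]
  have h3 : ∑ m ∈ F, Set.indicator (↑F) (fun _ => (1:ℝ≥0∞)) m = (F.card : ℝ≥0∞) := by
    rw [Finset.sum_congr rfl (fun m hm => Set.indicator_of_mem (by simpa using hm) _)]
    simp
  rw [h3, hcard]
  have h4 : ((2^(n*d) : ℕ) : ℝ≥0∞) = (2:ℝ≥0∞)^((n*d : ℕ) : ℝ) := by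
    rw [ENNReal.rpow_natCast]
    push_cast
    rfl
  rw [h4]
  refine ENNReal.rpow_le_rpow_of_exponent_le (by norm_num) ?_
  have hn' : ((n : ℕ) : ℝ) = (j:ℝ) - (ν:ℝ) := by
    have h5 : (((n : ℕ) : ℤ) : ℝ) = ((j - ν : ℤ) : ℝ) := by
      rw [hn, Int.toNat_of_nonneg (by omega : (0:ℤ) ≤ j - ν)]
    push_cast at h5 ⊢
    linarith
  have : ((n*d : ℕ) : ℝ) = ((n:ℕ):ℝ) * d := by push_cast; ring
  rw [this, hn']

set_option maxHeartbeats 1000000 in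
lemma level_le (d : ℕ) {p₁ p₂ : ℝ} (hp₁ : 0 < p₁) (hp₂ : 0 < p₂)
    {φ₁ : ℝ → ℝ} (φ₂ : ℝ → ℝ) (hφ₁ : memG d p₁ φ₁) (hφ₁1 : φ₁ 1 = 1)
    (j : ℕ) (lam : (Fin d → ℤ) → ℂ) :
    levelNorm d φ₂ p₂ j lam ≤
      (⨆ (ν : ℤ) (_ : ν ≤ (j:ℤ)),
        ENNReal.ofReal (φ₂ ((2:ℝ)^(-ν))) /
          ENNReal.ofReal (φ₁ ((2:ℝ)^(-ν)) ^ (min 1 (p₁/p₂)))) *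
      ENNReal.ofReal (φ₁ ((2:ℝ)^(-(j:ℤ))) ^ (min 1 (p₁/p₂) - 1)) *
      levelNorm d φ₁ p₁ j lam := by
  set ρ : ℝ := min 1 (p₁/p₂) with hρdef
  have hρpos : 0 < ρ := lt_min one_pos (by positivity)
  have hρle : ρ ≤ 1 := min_le_left _ _
  set L := levelNorm d φ₁ p₁ j lam with hL
  set α : ℝ≥0∞ := ⨆ (ν : ℤ) (_ : ν ≤ (j:ℤ)),
      ENNReal.ofReal (φ₂ ((2:ℝ)^(-ν))) / ENNReal.ofReal (φ₁ ((2:ℝ)^(-ν)) ^ ρ) with hα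
  -- basic positivity
  have hc : ∀ ν : ℤ, 0 < φ₁ ((2:ℝ)^(-ν)) := fun ν => memG_pos hφ₁ hφ₁1 (by positivity)
  -- ENNReal powers of two
  set E : ℝ → ℝ≥0∞ := fun x => (2:ℝ≥0∞) ^ x with hEdef
  have hE : ∀ x : ℝ, ENNReal.ofReal ((2:ℝ)^x) = E x := by
    intro x
    show ENNReal.ofReal ((2:ℝ)^x) = (2:ℝ≥0∞) ^ x
    rw [show ((2:ℝ≥0∞)) = ENNReal.ofReal (2:ℝ) from by norm_num]
    exact (ENNReal.ofReal_rpow_of_pos two_pos).symm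
  have hEne0 : ∀ x, E x ≠ 0 := fun x => by simp [hEdef, ENNReal.rpow_eq_zero_iff]
  have hEnetop : ∀ x, E x ≠ ∞ := fun x => by simp [hEdef, ENNReal.rpow_eq_top_iff]
  have hEadd : ∀ x y, E x * E y = E (x + y) := fun x y =>
    (ENNReal.rpow_add x y (by norm_num) (by norm_num)).symm
  have hE0 : E 0 = 1 := by simp [hEdef]
  -- the pointwise values
  set a : (Fin d → ℤ) → ℝ≥0∞ := fun m => ENNReal.ofReal (‖lam m‖) with hadef
  have ha : ∀ (p : ℝ), 0 < p → ∀ m,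
      ENNReal.ofReal (‖lam m‖ ^ p) = a m ^ p := fun p hp m =>
    (ENNReal.ofReal_rpow_of_nonneg (norm_nonneg _) hp.le).symm
  have hane : ∀ m, a m ≠ ∞ := fun m => ENNReal.ofReal_ne_top
  -- lower bounds from L
  have hsum : ∀ (p : ℝ), 0 < p → ∀ (ν' : ℤ) (k' : Fin d → ℤ),
      (∑' m : {m : Fin d → ℤ // dyadicCube d (j:ℤ) m ⊆ dyadicCube d ν' k'},
        ENNReal.ofReal (‖lam m.1‖ ^ p))
      = ∑' m : {m : Fin d → ℤ // dyadicCube d (j:ℤ) m ⊆ dyadicCube d ν' k'},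
        a m.1 ^ p := fun p hp ν' k' => tsum_congr fun m => ha p hp m.1
  have hL1raw : ∀ (ν' : ℤ), ν' ≤ (j:ℤ) → ∀ k' : Fin d → ℤ,
      ENNReal.ofReal (φ₁ ((2:ℝ)^(-ν'))) *
        ENNReal.ofReal ((2:ℝ) ^ (((ν':ℝ) - (j:ℝ)) * ((d:ℝ)/p₁))) *
        (∑' m : {m : Fin d → ℤ // dyadicCube d (j:ℤ) m ⊆ dyadicCube d ν' k'},
          ENNReal.ofReal (‖lam m.1‖ ^ p₁)) ^ (1/p₁) ≤ L := by
    intro ν' hν' k'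
    rw [hL, levelNorm]
    exact le_iSup_of_le ν' (le_iSup_of_le hν' (le_iSup
      (fun k' => ENNReal.ofReal (φ₁ ((2:ℝ)^(-ν'))) *
        ENNReal.ofReal ((2:ℝ) ^ (((ν':ℝ) - (j:ℝ)) * ((d:ℝ)/p₁))) *
        (∑' m : {m : Fin d → ℤ // dyadicCube d (j:ℤ) m ⊆ dyadicCube d ν' k'},
          ENNReal.ofReal (‖lam m.1‖ ^ p₁)) ^ (1/p₁)) k'))
  have hL1 : ∀ (ν' : ℤ), ν' ≤ (j:ℤ) → ∀ k' : Fin d → ℤ,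
      ENNReal.ofReal (φ₁ ((2:ℝ)^(-ν'))) * E (((ν':ℝ)-(j:ℝ)) * ((d:ℝ)/p₁)) *
        (∑' m : {m : Fin d → ℤ // dyadicCube d (j:ℤ) m ⊆ dyadicCube d ν' k'},
          a m.1 ^ p₁) ^ (1/p₁) ≤ L := by
    intro ν' hν' k'
    have h0 := hL1raw ν' hν' k'
    rw [hsum p₁ hp₁ ν' k', hE] at h0
    exact h0
  have hLm : ∀ m : Fin d → ℤ, ENNReal.ofReal (φ₁ ((2:ℝ)^(-(j:ℤ)))) * a m ≤ L := by
    intro m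
    have h0 := hL1 (j:ℤ) le_rfl m
    have he : (((j:ℤ):ℝ)-(j:ℝ)) * ((d:ℝ)/p₁) = 0 := by push_cast; ring
    rw [he, hE0, mul_one] at h0
    refine le_trans ?_ h0
    have h1 : a m ^ p₁ ≤ ∑' m' : {m' : Fin d → ℤ //
        dyadicCube d (j:ℤ) m' ⊆ dyadicCube d (j:ℤ) m}, a m'.1 ^ p₁ :=
      ENNReal.le_tsum (⟨m, Set.Subset.refl _⟩ : {m' : Fin d → ℤ //
        dyadicCube d (j:ℤ) m' ⊆ dyadicCube d (j:ℤ) m})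
    have h2 := ENNReal.rpow_le_rpow h1 (by positivity : (0:ℝ) ≤ 1/p₁)
    rw [← ENNReal.rpow_mul, mul_one_div, div_self hp₁.ne', ENNReal.rpow_one] at h2
    exact mul_le_mul_right h2 _
  -- main goal
  rw [levelNorm]
  refine iSup_le fun ν => iSup_le fun hν => iSup_le fun k => ?_
  rw [hE]
  set c₂ := ENNReal.ofReal (φ₂ ((2:ℝ)^(-ν))) with hc₂
  set c₁ν := ENNReal.ofReal (φ₁ ((2:ℝ)^(-ν))) with hc₁ν
  set c₁j := ENNReal.ofReal (φ₁ ((2:ℝ)^(-(j:ℤ)))) with hc₁j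
  have hc₁ν0 : c₁ν ≠ 0 := (ENNReal.ofReal_pos.2 (hc ν)).ne'
  have hc₁νt : c₁ν ≠ ∞ := ENNReal.ofReal_ne_top
  have hc₁j0 : c₁j ≠ 0 := (ENNReal.ofReal_pos.2 (hc (j:ℤ))).ne'
  have hc₁jt : c₁j ≠ ∞ := ENNReal.ofReal_ne_top
  set x₁ : ℝ := (((ν:ℝ))-(j:ℝ)) * ((d:ℝ)/p₁) with hx₁
  set x₂ : ℝ := (((ν:ℝ))-(j:ℝ)) * ((d:ℝ)/p₂) with hx₂
  set S₁ := ∑' m : {m : Fin d → ℤ // dyadicCube d (j:ℤ) m ⊆ dyadicCube d ν k},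
      a m.1 ^ p₁ with hS₁
  set S₂ := ∑' m : {m : Fin d → ℤ // dyadicCube d (j:ℤ) m ⊆ dyadicCube d ν k},
      a m.1 ^ p₂ with hS₂
  have hgoalsum : (∑' m : {m : Fin d → ℤ // dyadicCube d (j:ℤ) m ⊆ dyadicCube d ν k},
      ENNReal.ofReal (‖lam m.1‖ ^ p₂)) = S₂ := tsum_congr fun m => ha p₂ hp₂ m.1
  rw [hgoalsum]
  -- the sup bound on φ₂/φ₁^ρ
  have hαν : c₂ ≤ α * c₁ν ^ ρ := by
    have h1 : c₂ / ENNReal.ofReal (φ₁ ((2:ℝ)^(-ν)) ^ ρ) ≤ α := by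
      rw [hα]
      exact le_iSup₂ (f := fun (ν' : ℤ) (_ : ν' ≤ (j:ℤ)) =>
        ENNReal.ofReal (φ₂ ((2:ℝ)^(-ν'))) / ENNReal.ofReal (φ₁ ((2:ℝ)^(-ν')) ^ ρ)) ν hν
    have h2 : ENNReal.ofReal (φ₁ ((2:ℝ)^(-ν)) ^ ρ) = c₁ν ^ ρ :=
      (ENNReal.ofReal_rpow_of_pos (hc ν)).symm
    rw [h2] at h1
    have h3 : c₁ν ^ ρ ≠ 0 := by
      simp [ENNReal.rpow_eq_zero_iff, hc₁ν0, hc₁νt]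
    have h4 : c₁ν ^ ρ ≠ ∞ := by
      simp [ENNReal.rpow_eq_top_iff, hc₁ν0, hc₁νt]
    calc c₂ = c₂ / c₁ν ^ ρ * c₁ν ^ ρ := (ENNReal.div_mul_cancel h3 h4).symm
      _ ≤ α * c₁ν ^ ρ := mul_le_mul_left h1 _
  have hS₁L : S₁ ^ (1/p₁) ≤ (c₁ν * E x₁)⁻¹ * L := by
    have h0 := hL1 ν hν k
    rw [← hS₁, ← hc₁ν, ← hx₁] at h0
    have hne0 : c₁ν * E x₁ ≠ 0 := by simp [hc₁ν0, hEne0]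
    have hnet : c₁ν * E x₁ ≠ ∞ := ENNReal.mul_ne_top hc₁νt (hEnetop _)
    calc S₁ ^ (1/p₁) = (c₁ν * E x₁)⁻¹ * (c₁ν * E x₁ * S₁ ^ (1/p₁)) := by
          rw [← mul_assoc, ENNReal.inv_mul_cancel hne0 hnet, one_mul]
      _ ≤ (c₁ν * E x₁)⁻¹ * L := mul_le_mul_right h0 _
  rcases le_or_gt p₂ p₁ with hle | hlt
  -- Case A : p₂ ≤ p₁, ρ = 1
  · have hρ1 : ρ = 1 := min_eq_left ((one_le_div hp₂).2 hle)
    have hend : ENNReal.ofReal (φ₁ ((2:ℝ)^(-(j:ℤ))) ^ (ρ - 1)) = 1 := by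
      rw [hρ1]
      norm_num
    have hpm := tsum_power_mean (fun m : {m : Fin d → ℤ //
        dyadicCube d (j:ℤ) m ⊆ dyadicCube d ν k} => a m.1) hp₂ hle
    rw [← hS₁, ← hS₂] at hpm
    have hN : (∑' _ : {m : Fin d → ℤ // dyadicCube d (j:ℤ) m ⊆ dyadicCube d ν k},
        (1:ℝ≥0∞)) ^ (1/p₂ - 1/p₁) ≤ E (((j:ℝ) - (ν:ℝ)) * d * (1/p₂ - 1/p₁)) := by
      have h1 := tsum_one_le_card hν k
      have h2 := ENNReal.rpow_le_rpow h1 (by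
        have : 1/p₁ ≤ 1/p₂ := one_div_le_one_div_of_le hp₂ hle
        linarith : (0:ℝ) ≤ 1/p₂ - 1/p₁)
      rwa [← ENNReal.rpow_mul] at h2
    calc c₂ * E x₂ * S₂ ^ (1/p₂)
        ≤ c₂ * E x₂ * (E (((j:ℝ) - (ν:ℝ)) * d * (1/p₂ - 1/p₁)) * S₁ ^ (1/p₁)) := by
          refine mul_le_mul_right (hpm.trans (mul_le_mul_left hN _)) _
      _ = c₂ * (E x₂ * E (((j:ℝ) - (ν:ℝ)) * d * (1/p₂ - 1/p₁))) * S₁ ^ (1/p₁) := by ring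
      _ = c₂ * E x₁ * S₁ ^ (1/p₁) := by
          rw [hEadd]
          have e : x₂ + ((j:ℝ) - (ν:ℝ)) * (d:ℝ) * (1/p₂ - 1/p₁) = x₁ := by
            rw [hx₁, hx₂]
            field_simp
            ring
          rw [e]
      _ ≤ (α * c₁ν ^ ρ) * E x₁ * S₁ ^ (1/p₁) := by
          exact mul_le_mul_left (mul_le_mul_left hαν _) _
      _ = α * (c₁ν * E x₁ * S₁ ^ (1/p₁)) := by rw [hρ1, ENNReal.rpow_one]; ring
      _ ≤ α * L := by
          refine mul_le_mul_right ?_ _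
          have h0 := hL1 ν hν k
          rw [← hS₁, ← hc₁ν, ← hx₁] at h0
          exact h0
      _ = α * ENNReal.ofReal (φ₁ ((2:ℝ)^(-(j:ℤ))) ^ (ρ - 1)) * L := by rw [hend, mul_one]
  -- Case B : p₁ < p₂, ρ = p₁/p₂ < 1
  · have hρ2 : ρ = p₁/p₂ := min_eq_right (le_of_lt ((div_lt_one hp₂).2 hlt))
    have hρlt1 : ρ < 1 := by rw [hρ2]; exact (div_lt_one hp₂).2 hlt
    -- M bound
    have hM : ∀ m, a m ≤ c₁j⁻¹ * L := by
      intro m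
      have h0 := hLm m
      calc a m = c₁j⁻¹ * (c₁j * a m) := by
            rw [← mul_assoc, ENNReal.inv_mul_cancel hc₁j0 hc₁jt, one_mul]
        _ ≤ c₁j⁻¹ * L := mul_le_mul_right h0 _
    -- S₂ ≤ M^{p₂ - p₁} * S₁
    have hS₂le : S₂ ≤ (c₁j⁻¹ * L) ^ (p₂ - p₁) * S₁ := by
      rw [hS₂, hS₁, ← ENNReal.tsum_mul_left]
      refine ENNReal.tsum_le_tsum fun m => ?_
      have h1 : a m.1 ^ p₂ = a m.1 ^ (p₂ - p₁) * a m.1 ^ p₁ := by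
        rw [← ENNReal.rpow_add_of_nonneg _ _ (by linarith) hp₁.le]
        ring_nf
      rw [h1]
      exact mul_le_mul_left (ENNReal.rpow_le_rpow (hM m.1) (by linarith)) _
    have hS₂root : S₂ ^ (1/p₂) ≤
        (c₁j⁻¹ * L) ^ (1 - ρ) * ((c₁ν * E x₁)⁻¹ * L) ^ ρ := by
      have h2 := ENNReal.rpow_le_rpow hS₂le (by positivity : (0:ℝ) ≤ 1/p₂)
      rw [ENNReal.mul_rpow_of_nonneg _ _ (by positivity), ← ENNReal.rpow_mul] at h2
      have e1 : (p₂ - p₁) * (1/p₂) = 1 - ρ := by rw [hρ2]; field_simp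
      have e2 : S₁ ^ (1/p₂) = (S₁ ^ (1/p₁)) ^ ρ := by
        rw [← ENNReal.rpow_mul, hρ2]
        congr 1
        field_simp
      rw [e1, e2] at h2
      exact h2.trans (mul_le_mul_right
        (ENNReal.rpow_le_rpow hS₁L hρpos.le) _)
    -- assemble
    have hu0 : c₁ν ^ ρ ≠ 0 := by simp [ENNReal.rpow_eq_zero_iff, hc₁ν0, hc₁νt]
    have hut : c₁ν ^ ρ ≠ ∞ := by simp [ENNReal.rpow_eq_top_iff, hc₁ν0, hc₁νt]
    have hx₁ρ : (E x₁) ^ ρ = E x₂ := by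
      show ((2:ℝ≥0∞) ^ x₁) ^ ρ = (2:ℝ≥0∞) ^ x₂
      rw [← ENNReal.rpow_mul]
      congr 1
      rw [hx₁, hx₂, hρ2]
      field_simp
    have hend : ENNReal.ofReal (φ₁ ((2:ℝ)^(-(j:ℤ))) ^ (ρ - 1)) = (c₁j ^ (1 - ρ))⁻¹ := by
      rw [← ENNReal.ofReal_rpow_of_pos (hc (j:ℤ)), ← hc₁j,
        show ρ - 1 = -(1 - ρ) by ring, ENNReal.rpow_neg]
    have hinv : ((c₁ν * E x₁)⁻¹ * L) ^ ρ = (c₁ν ^ ρ)⁻¹ * (E x₂)⁻¹ * L ^ ρ := by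
      rw [ENNReal.mul_rpow_of_nonneg _ _ hρpos.le,
        ENNReal.mul_inv (Or.inl hc₁ν0) (Or.inl hc₁νt),
        ENNReal.mul_rpow_of_nonneg _ _ hρpos.le,
        ENNReal.inv_rpow, ENNReal.inv_rpow, hx₁ρ]
    have hMrw : (c₁j⁻¹ * L) ^ (1 - ρ) = (c₁j ^ (1 - ρ))⁻¹ * L ^ (1 - ρ) := by
      rw [ENNReal.mul_rpow_of_nonneg _ _ (by linarith : (0:ℝ) ≤ 1 - ρ), ENNReal.inv_rpow]
    calc c₂ * E x₂ * S₂ ^ (1/p₂)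
        ≤ (α * c₁ν ^ ρ) * E x₂ * ((c₁j⁻¹ * L) ^ (1 - ρ) * ((c₁ν * E x₁)⁻¹ * L) ^ ρ) :=
          mul_le_mul' (mul_le_mul_left hαν _) hS₂root
      _ = α * (c₁j ^ (1 - ρ))⁻¹ * (c₁ν ^ ρ * (c₁ν ^ ρ)⁻¹) * (E x₂ * (E x₂)⁻¹) *
            (L ^ (1 - ρ) * L ^ ρ) := by
          rw [hMrw, hinv]
          ring
      _ = α * (c₁j ^ (1 - ρ))⁻¹ * L := by
          rw [ENNReal.mul_inv_cancel hu0 hut,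
            ENNReal.mul_inv_cancel (hEne0 x₂) (hEnetop x₂),
            ← ENNReal.rpow_add_of_nonneg _ _ (by linarith : (0:ℝ) ≤ 1 - ρ) hρpos.le,
            show (1 - ρ) + ρ = 1 by ring, ENNReal.rpow_one]
          ring
      _ = α * ENNReal.ofReal (φ₁ ((2:ℝ)^(-(j:ℤ))) ^ (ρ - 1)) * L := by rw [hend]

/-- sufficiency part of the main embedding theorem: with
`ρ = min(1, p₁/p₂)`, `α_j = sup_{ν ≤ j} φ₂(2^{-ν})/φ₁(2^{-ν})^ρ`,
if `sup_{ν ≤ 0} φ₂(2^{-ν})/φ₁(2^{-ν})^ρ < ∞` and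
`(2^{j(s₂-s₁)}·α_j·φ₁(2^{-j})^{ρ-1})_j ∈ ℓ_{q*}`, `1/q* = (1/q₂ - 1/q₁)₊`, then the identity
is a bounded embedding `n^{s₁}_{φ₁,p₁,q₁} ↪ n^{s₂}_{φ₂,p₂,q₂}`. -/
theorem sequence_space_embedding_sufficient (d : ℕ) (hd : 1 ≤ d)
    (s₁ s₂ p₁ p₂ : ℝ) (q₁ q₂ : ℝ≥0∞)
    (hp₁ : 0 < p₁) (hp₂ : 0 < p₂) (hq₁ : 0 < q₁) (hq₂ : 0 < q₂)
    (φ₁ φ₂ : ℝ → ℝ) (hφ₁ : memG d p₁ φ₁) (hφ₂ : memG d p₂ φ₂)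
    (hφ₁1 : φ₁ 1 = 1) (hφ₂1 : φ₂ 1 = 1) :
    let ρ : ℝ := min 1 (p₁ / p₂)
    let α : ℕ → ℝ≥0∞ := fun j =>
      ⨆ (ν : ℤ) (_ : ν ≤ (j : ℤ)),
        ENNReal.ofReal (φ₂ ((2 : ℝ) ^ (-ν))) / ENNReal.ofReal (φ₁ ((2 : ℝ) ^ (-ν)) ^ ρ)
    let qstar : ℝ≥0∞ := (q₂⁻¹ - q₁⁻¹)⁻¹
    let cseq : ℕ → ℝ≥0∞ := fun j =>
      ENNReal.ofReal ((2 : ℝ) ^ ((j : ℝ) * (s₂ - s₁))) * α j *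
        ENNReal.ofReal (φ₁ ((2 : ℝ) ^ (-(j : ℤ))) ^ (ρ - 1))
    ((⨆ (ν : ℤ) (_ : ν ≤ (0 : ℤ)),
        ENNReal.ofReal (φ₂ ((2 : ℝ) ^ (-ν))) / ENNReal.ofReal (φ₁ ((2 : ℝ) ^ (-ν)) ^ ρ)) < ∞) →
    ((if qstar = ∞ then ⨆ j, cseq j else ∑' j, (cseq j) ^ qstar.toReal) < ∞) →
    ∃ C : ℝ≥0∞, C < ∞ ∧ ∀ lam : ℕ → (Fin d → ℤ) → ℂ,
      bmNorm d φ₂ s₂ p₂ q₂ lam ≤ C * bmNorm d φ₁ s₁ p₁ q₁ lam := by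
  intro ρ α qstar cseq hsup hqs
  clear hsup
  -- pointwise bound : t j ≤ cseq j * b j
  have hpt : ∀ (lam : ℕ → (Fin d → ℤ) → ℂ) (j : ℕ),
      ENNReal.ofReal ((2:ℝ) ^ ((j:ℝ) * s₂)) * levelNorm d φ₂ p₂ j (lam j) ≤
        cseq j * (ENNReal.ofReal ((2:ℝ) ^ ((j:ℝ) * s₁)) * levelNorm d φ₁ p₁ j (lam j)) := by
    intro lam j
    have h1 := level_le d hp₁ hp₂ φ₂ hφ₁ hφ₁1 j (lam j)
    have h2 : ENNReal.ofReal ((2:ℝ) ^ ((j:ℝ) * s₂)) =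
        ENNReal.ofReal ((2:ℝ) ^ ((j:ℝ) * (s₂ - s₁))) * ENNReal.ofReal ((2:ℝ) ^ ((j:ℝ) * s₁)) := by
      rw [← ENNReal.ofReal_mul (by positivity), ← Real.rpow_add two_pos]
      ring_nf
    calc ENNReal.ofReal ((2:ℝ) ^ ((j:ℝ) * s₂)) * levelNorm d φ₂ p₂ j (lam j)
        ≤ ENNReal.ofReal ((2:ℝ) ^ ((j:ℝ) * s₂)) *
            (α j * ENNReal.ofReal (φ₁ ((2:ℝ)^(-(j:ℤ))) ^ (ρ - 1)) *
              levelNorm d φ₁ p₁ j (lam j)) := mul_le_mul_right h1 _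
      _ = cseq j * (ENNReal.ofReal ((2:ℝ) ^ ((j:ℝ) * s₁)) * levelNorm d φ₁ p₁ j (lam j)) := by
          rw [h2]
          show _ = ENNReal.ofReal ((2:ℝ) ^ ((j:ℝ) * (s₂ - s₁))) * α j *
              ENNReal.ofReal (φ₁ ((2:ℝ) ^ (-(j:ℤ))) ^ (ρ - 1)) *
            (ENNReal.ofReal ((2:ℝ) ^ ((j:ℝ) * s₁)) * levelNorm d φ₁ p₁ j (lam j))
          ring
  rcases lt_or_ge q₂ q₁ with hqlt | hqle
  · -- q₂ < q₁ : Hölder case ; qstar ≠ ∞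
    have hq₂top : q₂ ≠ ∞ := (hqlt.trans_le le_top).ne
    have hqr2 : 0 < q₂.toReal := ENNReal.toReal_pos hq₂.ne' hq₂top
    have hsubpos : 0 < q₂⁻¹ - q₁⁻¹ := tsub_pos_of_lt (ENNReal.inv_lt_inv.2 hqlt)
    have hqstar_ne_top : qstar ≠ ∞ := by
      show (q₂⁻¹ - q₁⁻¹)⁻¹ ≠ ∞
      simp [ENNReal.inv_eq_top, hsubpos.ne']
    rw [if_neg hqstar_ne_top] at hqs
    rcases eq_or_ne q₁ ∞ with hq1top | hq1top
    · -- q₁ = ∞, qstar = q₂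
      have hqsq : qstar = q₂ := by
        show (q₂⁻¹ - q₁⁻¹)⁻¹ = q₂
        rw [hq1top]
        simp
      refine ⟨(∑' j, (cseq j) ^ q₂.toReal) ^ (1/q₂.toReal), ?_, ?_⟩
      · exact ENNReal.rpow_lt_top_of_nonneg (by positivity) (by rw [hqsq] at hqs; exact hqs.ne)
      intro lam
      rw [bmNorm, bmNorm, if_neg hq₂top, if_pos hq1top]
      set b : ℕ → ℝ≥0∞ := fun j =>
        ENNReal.ofReal ((2:ℝ) ^ ((j:ℝ) * s₁)) * levelNorm d φ₁ p₁ j (lam j) with hb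
      set B := ⨆ j, b j with hB
      have key : ∀ j : ℕ,
          (ENNReal.ofReal ((2:ℝ) ^ ((j:ℝ) * s₂)) * levelNorm d φ₂ p₂ j (lam j)) ^ q₂.toReal
            ≤ (cseq j) ^ q₂.toReal * B ^ q₂.toReal := by
        intro j
        rw [← ENNReal.mul_rpow_of_nonneg _ _ hqr2.le]
        refine ENNReal.rpow_le_rpow ?_ hqr2.le
        exact (hpt lam j).trans (mul_le_mul_right (le_iSup b j) _)
      calc (∑' j : ℕ, (ENNReal.ofReal ((2:ℝ) ^ ((j:ℝ) * s₂)) *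
              levelNorm d φ₂ p₂ j (lam j)) ^ q₂.toReal) ^ (1/q₂.toReal)
          ≤ (∑' j : ℕ, (cseq j) ^ q₂.toReal * B ^ q₂.toReal) ^ (1/q₂.toReal) :=
            ENNReal.rpow_le_rpow (ENNReal.tsum_le_tsum key) (by positivity)
        _ = ((∑' j : ℕ, (cseq j) ^ q₂.toReal) * B ^ q₂.toReal) ^ (1/q₂.toReal) := by
            rw [ENNReal.tsum_mul_right]
        _ = (∑' j : ℕ, (cseq j) ^ q₂.toReal) ^ (1/q₂.toReal) * B := by
            rw [ENNReal.mul_rpow_of_nonneg _ _ (by positivity), ← ENNReal.rpow_mul,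
              mul_one_div, div_self hqr2.ne', ENNReal.rpow_one]
    · -- q₁ < ∞
      have hqr1 : 0 < q₁.toReal := ENNReal.toReal_pos hq₁.ne' hq1top
      have hrlt : q₂.toReal < q₁.toReal :=
        ENNReal.toReal_strict_mono hq1top hqlt
      set r : ℝ := q₁.toReal / q₂.toReal with hr
      have hr1 : 1 < r := (one_lt_div hqr2).2 hrlt
      have hconj : r.HolderConjugate (r/(r-1)) := .conjExponent hr1
      have hd0 : (0:ℝ) < q₂.toReal⁻¹ - q₁.toReal⁻¹ := by
        have := inv_strictAnti₀ hqr2 hrlt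
        linarith
      have hqstar_toReal : qstar.toReal = q₂.toReal * (r/(r-1)) := by
        show ((q₂⁻¹ - q₁⁻¹)⁻¹).toReal = _
        rw [ENNReal.toReal_inv, ENNReal.toReal_sub_of_le
          (ENNReal.inv_le_inv.2 hqlt.le) (ENNReal.inv_ne_top.2 hq₂.ne'),
          ENNReal.toReal_inv, ENNReal.toReal_inv, hr]
        rw [inv_eq_iff_eq_inv]
        field_simp
      refine ⟨(∑' j : ℕ, (cseq j) ^ qstar.toReal) ^ (1/qstar.toReal), ?_, ?_⟩
      · exact ENNReal.rpow_lt_top_of_nonneg (by positivity) hqs.ne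
      intro lam
      rw [bmNorm, bmNorm, if_neg hq₂top, if_neg hq1top]
      set b : ℕ → ℝ≥0∞ := fun j =>
        ENNReal.ofReal ((2:ℝ) ^ ((j:ℝ) * s₁)) * levelNorm d φ₁ p₁ j (lam j) with hb
      have e1 : ∀ j : ℕ, ((cseq j ^ q₂.toReal) ^ (r/(r-1))) = cseq j ^ qstar.toReal :=
        fun j => by rw [← ENNReal.rpow_mul, ← hqstar_toReal]
      have e2 : ∀ j : ℕ, ((b j ^ q₂.toReal) ^ r) = b j ^ q₁.toReal := fun j => by
        rw [← ENNReal.rpow_mul]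
        congr 1
        rw [hr]
        field_simp
      have key : ∀ j : ℕ,
          (ENNReal.ofReal ((2:ℝ) ^ ((j:ℝ) * s₂)) * levelNorm d φ₂ p₂ j (lam j)) ^ q₂.toReal
            ≤ (cseq j) ^ q₂.toReal * (b j) ^ q₂.toReal := by
        intro j
        rw [← ENNReal.mul_rpow_of_nonneg _ _ hqr2.le]
        exact ENNReal.rpow_le_rpow (hpt lam j) hqr2.le
      calc (∑' j : ℕ, (ENNReal.ofReal ((2:ℝ) ^ ((j:ℝ) * s₂)) *
              levelNorm d φ₂ p₂ j (lam j)) ^ q₂.toReal) ^ (1/q₂.toReal)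
          ≤ (∑' j : ℕ, (cseq j) ^ q₂.toReal * (b j) ^ q₂.toReal) ^ (1/q₂.toReal) :=
            ENNReal.rpow_le_rpow (ENNReal.tsum_le_tsum key) (by positivity)
        _ ≤ ((∑' j : ℕ, ((cseq j) ^ q₂.toReal) ^ (r/(r-1))) ^ (1/(r/(r-1))) *
              (∑' j : ℕ, ((b j) ^ q₂.toReal) ^ r) ^ (1/r)) ^ (1/q₂.toReal) :=
            ENNReal.rpow_le_rpow
              (tsum_holder (fun j => (cseq j) ^ q₂.toReal) (fun j => (b j) ^ q₂.toReal)
                hconj.symm) (by positivity)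
        _ = ((∑' j : ℕ, (cseq j) ^ qstar.toReal) ^ (1/(r/(r-1))) *
              (∑' j : ℕ, (b j) ^ q₁.toReal) ^ (1/r)) ^ (1/q₂.toReal) := by
            rw [tsum_congr e1, tsum_congr e2]
        _ = (∑' j : ℕ, (cseq j) ^ qstar.toReal) ^ (1/qstar.toReal) *
              (∑' j : ℕ, (b j) ^ q₁.toReal) ^ (1/q₁.toReal) := by
            rw [ENNReal.mul_rpow_of_nonneg _ _ (by positivity), ← ENNReal.rpow_mul,
              ← ENNReal.rpow_mul]
            have e3 : (1/(r/(r-1))) * (1/q₂.toReal) = 1/qstar.toReal := by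
              rw [hqstar_toReal]
              have : r - 1 ≠ 0 := by linarith
              field_simp
            have e4 : (1/r) * (1/q₂.toReal) = 1/q₁.toReal := by
              rw [hr]
              field_simp
            rw [e3, e4]
  · -- q₁ ≤ q₂ : qstar = ∞
    have hqstar_top : qstar = ∞ := by
      show (q₂⁻¹ - q₁⁻¹)⁻¹ = ∞
      rw [tsub_eq_zero_of_le (ENNReal.inv_le_inv.2 hqle)]
      simp
    rw [if_pos hqstar_top] at hqs
    refine ⟨⨆ j, cseq j, hqs, ?_⟩
    intro lam
    set C := ⨆ j, cseq j with hC
    have hptC : ∀ (j : ℕ),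
        ENNReal.ofReal ((2:ℝ) ^ ((j:ℝ) * s₂)) * levelNorm d φ₂ p₂ j (lam j) ≤
          C * (ENNReal.ofReal ((2:ℝ) ^ ((j:ℝ) * s₁)) * levelNorm d φ₁ p₁ j (lam j)) :=
      fun j => (hpt lam j).trans (mul_le_mul_left (le_iSup cseq j) _)
    set b : ℕ → ℝ≥0∞ := fun j =>
      ENNReal.ofReal ((2:ℝ) ^ ((j:ℝ) * s₁)) * levelNorm d φ₁ p₁ j (lam j) with hb
    have hBle : (⨆ j, b j) ≤ bmNorm d φ₁ s₁ p₁ q₁ lam := by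
      rw [bmNorm]
      split_ifs with h
      · exact le_rfl
      · exact iSup_le fun j => le_lq_norm b (ENNReal.toReal_pos hq₁.ne' h) j
    rcases eq_or_ne q₂ ∞ with hq2top | hq2top
    · rw [bmNorm, if_pos hq2top]
      refine iSup_le fun j => ?_
      exact (hptC j).trans (mul_le_mul_right ((le_iSup b j).trans hBle) _)
    · have hqr2 : 0 < q₂.toReal := ENNReal.toReal_pos hq₂.ne' hq2top
      have hq1top : q₁ ≠ ∞ := (hqle.trans_lt (lt_top_iff_ne_top.2 hq2top)).ne
      have hqr1 : 0 < q₁.toReal := ENNReal.toReal_pos hq₁.ne' hq1top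
      have hrle : q₁.toReal ≤ q₂.toReal := ENNReal.toReal_mono hq2top hqle
      rw [bmNorm, if_neg hq2top]
      calc (∑' j : ℕ, (ENNReal.ofReal ((2:ℝ) ^ ((j:ℝ) * s₂)) *
              levelNorm d φ₂ p₂ j (lam j)) ^ q₂.toReal) ^ (1/q₂.toReal)
          ≤ (∑' j : ℕ, (C * b j) ^ q₂.toReal) ^ (1/q₂.toReal) := by
            refine ENNReal.rpow_le_rpow (ENNReal.tsum_le_tsum fun j =>
              ENNReal.rpow_le_rpow (hptC j) hqr2.le) (by positivity)
        _ = C * (∑' j : ℕ, b j ^ q₂.toReal) ^ (1/q₂.toReal) := by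
            have : ∀ j : ℕ, (C * b j) ^ q₂.toReal = C ^ q₂.toReal * b j ^ q₂.toReal :=
              fun j => ENNReal.mul_rpow_of_nonneg _ _ hqr2.le
            rw [tsum_congr this, ENNReal.tsum_mul_left,
              ENNReal.mul_rpow_of_nonneg _ _ (by positivity), ← ENNReal.rpow_mul,
              mul_one_div, div_self hqr2.ne', ENNReal.rpow_one]
        _ ≤ C * (∑' j : ℕ, b j ^ q₁.toReal) ^ (1/q₁.toReal) :=
            mul_le_mul_right (lq_mono b hqr1 hrle) _
        _ = C * bmNorm d φ₁ s₁ p₁ q₁ lam := by rw [bmNorm, if_neg hq1top]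
end

section
/- With the notation of the embedding theorem (φᵢ ∈ G_{pᵢ}, φ₁(1)=φ₂(1)=1, ρ = min(1,p₁/p₂)), if the embedding n^{s₁}_{φ₁,p₁,q₁} ↪ n^{s₂}_{φ₂,p₂,q₂} is bounded with p₁ ≥ p₂, then sup_{ν ≤ 0} φ₂(2^{-ν})/φ₁(2^{-ν}) < ∞. Proof via the test sequences λ^{(0,ν₀)} with λ_{0,m} = φ₁(2^{-ν₀})^{-1} for Q_{0,m} ⊂ Q_{ν₀,0} and 0 otherwise, which satisfy ‖λ^{(0,ν₀)} | n^{s₁}_{φ₁,p₁,q₁}‖ = 1 and ‖λ^{(0,ν₀)} | n^{s₂}_{φ₂,p₂,q₂}‖ = φ₂(2^{-ν₀})/φ₁(2^{-ν₀}). -/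
open MeasureTheory ENNReal NNReal

lemma two_zpow_neg_neg (n : ℕ) : (2:ℝ) ^ (-(-(n:ℤ))) = ((2:ℤ)^n : ℤ) := by
  push_cast
  rw [neg_neg, zpow_natCast]

lemma cube_zero_subset_iff (d : ℕ) (n : ℕ) (m k : Fin d → ℤ) :
    dyadicCube d 0 m ⊆ dyadicCube d (-(n:ℤ)) k ↔
      ∀ i, (2:ℤ)^n * k i ≤ m i ∧ m i + 1 ≤ (2:ℤ)^n * (k i + 1) := by
  have h2 : (2:ℝ) ^ (-(-(n:ℤ))) = ((2:ℤ)^n : ℤ) := two_zpow_neg_neg n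
  constructor
  · intro h i
    have hm : (fun i => (m i : ℝ)) ∈ dyadicCube d 0 m := by
      intro i
      simp [zpow_zero]
    have hthis := h hm i
    rw [h2] at hthis
    constructor
    · exact_mod_cast hthis.1
    · have hlt : (m i : ℝ) < ((2:ℤ)^n * (k i + 1) : ℤ) := by
        push_cast
        push_cast at hthis
        linarith [hthis.2]
      exact Int.add_one_le_iff.mpr (by exact_mod_cast hlt)
  · intro h x hx i
    have h1 := (hx i).1
    have h2' := (hx i).2
    rw [neg_zero, zpow_zero, one_mul] at h1 h2'
    rw [h2]
    have c1 : ((2^n * k i : ℤ):ℝ) ≤ (m i : ℝ) := by exact_mod_cast (h i).1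
    have c2 : ((m i + 1 : ℤ):ℝ) ≤ ((2^n * (k i+1) : ℤ):ℝ) := by exact_mod_cast (h i).2
    push_cast at c1 c2
    constructor
    · push_cast; linarith
    · push_cast; linarith
noncomputable def testFun (a : ℝ) (N₀ : ℤ) (d : ℕ) : (Fin d → ℤ) → ℂ :=
  fun m => if ∀ i, 0 ≤ m i ∧ m i < N₀ then (a:ℂ) else 0

noncomputable def boxT (d : ℕ) (n : ℕ) (k : Fin d → ℤ) (N₀ : ℤ) : Finset (Fin d → ℤ) :=
  (Fintype.piFinset fun i => Finset.Ico ((2:ℤ)^n * k i) ((2:ℤ)^n * k i + 2^n)).filter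
    (fun m => ∀ i, 0 ≤ m i ∧ m i < N₀)

lemma mem_boxT (d n : ℕ) (k : Fin d → ℤ) (N₀ : ℤ) (m : Fin d → ℤ) :
    m ∈ boxT d n k N₀ ↔
      (dyadicCube d 0 m ⊆ dyadicCube d (-(n:ℤ)) k) ∧ (∀ i, 0 ≤ m i ∧ m i < N₀) := by
  rw [boxT, Finset.mem_filter, Fintype.mem_piFinset, cube_zero_subset_iff]
  constructor
  · rintro ⟨h1, h2⟩
    refine ⟨fun i => ?_, h2⟩
    have := h1 i
    rw [Finset.mem_Ico] at this
    constructor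
    · exact this.1
    · linarith [this.2]
  · rintro ⟨h1, h2⟩
    refine ⟨fun i => ?_, h2⟩
    rw [Finset.mem_Ico]
    have := h1 i
    constructor
    · exact this.1
    · linarith [this.2]

lemma tsum_test (d : ℕ) (p a : ℝ) (hp : 0 < p) (ha : 0 ≤ a) (N₀ : ℤ) (n : ℕ) (k : Fin d → ℤ) :
    (∑' m : {m : Fin d → ℤ // dyadicCube d (0:ℤ) m ⊆ dyadicCube d (-(n:ℤ)) k},
        ENNReal.ofReal (‖testFun a N₀ d m.1‖ ^ p))
      = ((boxT d n k N₀).card : ℝ≥0∞) * ENNReal.ofReal (a ^ p) := by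
  have key := tsum_subtype (s := {m : Fin d → ℤ | dyadicCube d 0 m ⊆ dyadicCube d (-(n:ℤ)) k})
    (f := fun m => ENNReal.ofReal (‖testFun a N₀ d m‖ ^ p))
  refine Eq.trans key ?_
  rw [tsum_eq_sum (s := boxT d n k N₀) ?_]
  · rw [Finset.sum_congr rfl (g := fun _ => ENNReal.ofReal (a ^ p)) ?_]
    · rw [Finset.sum_const, nsmul_eq_mul]
    · intro m hm
      rw [mem_boxT] at hm
      rw [Set.indicator_of_mem (show m ∈ {m : Fin d → ℤ | dyadicCube d 0 m ⊆ dyadicCube d (-(n:ℤ)) k} from hm.1)]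
      rw [testFun, if_pos hm.2, Complex.norm_real, Real.norm_eq_abs, abs_of_nonneg ha]
  · intro m hm
    rw [mem_boxT] at hm
    push_neg at hm
    by_cases hS : dyadicCube d 0 m ⊆ dyadicCube d (-(n:ℤ)) k
    · rw [Set.indicator_of_mem (show m ∈ {m : Fin d → ℤ | dyadicCube d 0 m ⊆ dyadicCube d (-(n:ℤ)) k} from hS)]
      rw [testFun, if_neg (by simpa using hm hS)]
      simp [Real.zero_rpow hp.ne']
    · exact Set.indicator_of_notMem (show m ∉ {m : Fin d → ℤ | dyadicCube d 0 m ⊆ dyadicCube d (-(n:ℤ)) k} from hS) _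

lemma card_boxT_le₁ (d n : ℕ) (k : Fin d → ℤ) (N₀ : ℤ) :
    (boxT d n k N₀).card ≤ 2 ^ (n * d) := by
  calc (boxT d n k N₀).card ≤ (Fintype.piFinset fun i : Fin d =>
        Finset.Ico ((2:ℤ)^n * k i) ((2:ℤ)^n * k i + 2^n)).card :=
      Finset.card_le_card (Finset.filter_subset _ _)
    _ = 2 ^ (n * d) := by
      rw [Fintype.card_piFinset]
      simp only [Int.card_Ico, add_sub_cancel_left, pow_mul, Finset.prod_const, Finset.card_univ, Fintype.card_fin,
        show ((2:ℤ)^n).toNat = 2^n from by exact_mod_cast rfl]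

lemma card_boxT_le₂ (d n n₀ : ℕ) (k : Fin d → ℤ) :
    (boxT d n k ((2:ℤ)^n₀)).card ≤ 2 ^ (n₀ * d) := by
  calc (boxT d n k ((2:ℤ)^n₀)).card
      ≤ (Fintype.piFinset fun _ : Fin d => Finset.Ico (0:ℤ) (2^n₀)).card := by
        apply Finset.card_le_card
        intro m hm
        rw [mem_boxT] at hm
        rw [Fintype.mem_piFinset]
        intro i
        rw [Finset.mem_Ico]
        exact hm.2 i
    _ = 2 ^ (n₀ * d) := by
      rw [Fintype.card_piFinset]
      simp only [Int.card_Ico, sub_zero, Finset.prod_const, Finset.card_univ,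
        Fintype.card_fin, pow_mul,
        show ((2:ℤ)^n₀).toNat = 2^n₀ from by exact_mod_cast rfl]

lemma card_boxT_eq (d n₀ : ℕ) :
    (boxT d n₀ (0 : Fin d → ℤ) ((2:ℤ)^n₀)).card = 2 ^ (n₀ * d) := by
  have : boxT d n₀ (0 : Fin d → ℤ) ((2:ℤ)^n₀)
      = Fintype.piFinset fun _ : Fin d => Finset.Ico (0:ℤ) (2^n₀) := by
    ext m
    rw [mem_boxT, Fintype.mem_piFinset]
    simp only [Finset.mem_Ico]
    constructor
    · exact fun h => h.2
    · intro h
      refine ⟨?_, h⟩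
      rw [cube_zero_subset_iff]
      intro i
      simp only [Pi.zero_apply, mul_zero]
      exact ⟨(h i).1, by linarith [(h i).2]⟩
  rw [this, Fintype.card_piFinset]
  simp only [Int.card_Ico, sub_zero, Finset.prod_const, Finset.card_univ,
        Fintype.card_fin, pow_mul,
        show ((2:ℤ)^n₀).toNat = 2^n₀ from by exact_mod_cast rfl]
lemma core_upper (d : ℕ) (p : ℝ) (hp : 0 < p) (φ : ℝ → ℝ) (hφ : memG d p φ)
    (n n₀ cnt : ℕ) (hc1 : cnt ≤ 2^(n*d)) (hc2 : cnt ≤ 2^(n₀*d)) :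
    φ ((2:ℝ)^(n:ℕ)) * (2:ℝ)^((-(n:ℝ)) * ((d:ℝ)/p)) * ((cnt:ℝ))^(1/p)
      ≤ φ ((2:ℝ)^(n₀:ℕ)) := by
  obtain ⟨hφ0, hmono, hanti⟩ := hφ
  have h2 : (0:ℝ) < 2 := two_pos
  have hpos : ∀ j : ℕ, (0:ℝ) < 2^j := fun j => pow_pos h2 j
  have hmem : ∀ j : ℕ, ((2:ℝ)^j) ∈ Set.Ioi (0:ℝ) := fun j => hpos j
  have hφpos : ∀ j : ℕ, 0 ≤ φ ((2:ℝ)^j) := fun j => hφ0 _ (hpos j)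
  have hcnt : ∀ m : ℕ, cnt ≤ 2^(m*d) → ((cnt:ℝ))^(1/p) ≤ (2:ℝ)^(((m:ℝ))*(d:ℝ)*(1/p)) := by
    intro m hm
    have hle : ((cnt:ℝ)) ≤ (2:ℝ)^(((m:ℝ))*(d:ℝ)) := by
      rw [show ((m:ℝ)*(d:ℝ)) = ((m*d : ℕ):ℝ) by push_cast; ring, Real.rpow_natCast]
      exact_mod_cast hm
    calc ((cnt:ℝ))^(1/p) ≤ ((2:ℝ)^(((m:ℝ))*(d:ℝ)))^(1/p) :=
          Real.rpow_le_rpow (Nat.cast_nonneg _) hle (by positivity)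
      _ = (2:ℝ)^(((m:ℝ))*(d:ℝ)*(1/p)) := by rw [← Real.rpow_mul h2.le]
  have conv1 : ∀ m : ℕ, ((2:ℝ)^(m:ℕ)) ^ (-(d:ℝ)/p) = (2:ℝ)^((-(m:ℝ)) * ((d:ℝ)/p)) := by
    intro m
    rw [← Real.rpow_natCast 2 m, ← Real.rpow_mul h2.le]
    rw [show ((m:ℝ)) * (-(d:ℝ)/p) = (-(m:ℝ)) * ((d:ℝ)/p) by ring]
  rcases le_total n n₀ with hc | hc
  · have key : φ ((2:ℝ)^(n:ℕ)) ≤ φ ((2:ℝ)^(n₀:ℕ)) :=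
      hmono (hmem n) (hmem n₀) (pow_le_pow_right₀ one_le_two hc)
    calc φ ((2:ℝ)^(n:ℕ)) * (2:ℝ)^((-(n:ℝ)) * ((d:ℝ)/p)) * ((cnt:ℝ))^(1/p)
        ≤ φ ((2:ℝ)^(n:ℕ)) * (2:ℝ)^((-(n:ℝ)) * ((d:ℝ)/p)) * (2:ℝ)^(((n:ℝ))*(d:ℝ)*(1/p)) := by
          exact mul_le_mul_of_nonneg_left (hcnt n hc1) (mul_nonneg (hφpos n) (Real.rpow_nonneg h2.le _))
      _ = φ ((2:ℝ)^(n:ℕ)) := by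
          rw [mul_assoc, ← Real.rpow_add h2,
            show (-(n:ℝ)) * ((d:ℝ)/p) + ((n:ℝ))*(d:ℝ)*(1/p) = 0 by ring,
            Real.rpow_zero, mul_one]
      _ ≤ φ ((2:ℝ)^(n₀:ℕ)) := key
  · have key : φ ((2:ℝ)^(n:ℕ)) * (2:ℝ)^((-(n:ℝ)) * ((d:ℝ)/p))
        ≤ φ ((2:ℝ)^(n₀:ℕ)) * (2:ℝ)^((-(n₀:ℝ)) * ((d:ℝ)/p)) := by
      have h := hanti (hmem n₀) (hmem n) (pow_le_pow_right₀ one_le_two hc)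
      simp only [conv1] at h
      exact h
    calc φ ((2:ℝ)^(n:ℕ)) * (2:ℝ)^((-(n:ℝ)) * ((d:ℝ)/p)) * ((cnt:ℝ))^(1/p)
        ≤ φ ((2:ℝ)^(n:ℕ)) * (2:ℝ)^((-(n:ℝ)) * ((d:ℝ)/p)) * (2:ℝ)^(((n₀:ℝ))*(d:ℝ)*(1/p)) := by
          apply mul_le_mul_of_nonneg_left (hcnt n₀ hc2)
          exact mul_nonneg (hφpos n) (Real.rpow_nonneg h2.le _)
      _ ≤ φ ((2:ℝ)^(n₀:ℕ)) * (2:ℝ)^((-(n₀:ℝ)) * ((d:ℝ)/p)) * (2:ℝ)^(((n₀:ℝ))*(d:ℝ)*(1/p)) := by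
          apply mul_le_mul_of_nonneg_right key (Real.rpow_nonneg h2.le _)
      _ = φ ((2:ℝ)^(n₀:ℕ)) := by
          rw [mul_assoc, ← Real.rpow_add h2,
            show (-(n₀:ℝ)) * ((d:ℝ)/p) + ((n₀:ℝ))*(d:ℝ)*(1/p) = 0 by ring,
            Real.rpow_zero, mul_one]

lemma tsum_test' (d : ℕ) (p a : ℝ) (hp : 0 < p) (ha : 0 ≤ a) (N₀ : ℤ) (n : ℕ) (k : Fin d → ℤ) :
    (∑' m : {m : Fin d → ℤ // dyadicCube d (((0:ℕ)):ℤ) m ⊆ dyadicCube d (-(n:ℤ)) k},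
        ENNReal.ofReal (‖testFun a N₀ d m.1‖ ^ p))
      = ((boxT d n k N₀).card : ℝ≥0∞) * ENNReal.ofReal (a ^ p) :=
  tsum_test d p a hp ha N₀ n k

lemma two_zpow_neg_neg' (n : ℕ) : (2:ℝ) ^ (-(-(n:ℤ))) = (2:ℝ)^(n:ℕ) := by
  rw [neg_neg, zpow_natCast]

lemma levelNorm_zero_le (d : ℕ) (p : ℝ) (hp : 0 < p) (φ : ℝ → ℝ) (hφ : memG d p φ)
    (n₀ : ℕ) (a : ℝ) (ha : 0 ≤ a) :
    levelNorm d φ p 0 (testFun a ((2:ℤ)^n₀) d)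
      ≤ ENNReal.ofReal (φ ((2:ℝ)^(n₀:ℕ)) * a) := by
  rw [levelNorm]
  refine iSup_le fun ν => iSup_le fun hν => iSup_le fun k => ?_
  obtain ⟨n, rfl⟩ : ∃ n : ℕ, ν = -(n:ℤ) := ⟨(-ν).toNat, by omega⟩
  simp only [Nat.cast_zero, Int.cast_neg, Int.cast_natCast, sub_zero, two_zpow_neg_neg']
  rw [tsum_test' d p a hp ha ((2:ℤ)^n₀) n k]
  set cnt := (boxT d n k ((2:ℤ)^n₀)).card with hcnt
  rw [show ((cnt : ℝ≥0∞)) = ENNReal.ofReal ((cnt:ℝ)) from (ENNReal.ofReal_natCast cnt).symm,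
    ← ENNReal.ofReal_mul (Nat.cast_nonneg cnt),
    ENNReal.ofReal_rpow_of_nonneg (mul_nonneg (Nat.cast_nonneg cnt) (Real.rpow_nonneg ha p))
      (by positivity),
    ← ENNReal.ofReal_mul (hφ.1 _ (by positivity)),
    ← ENNReal.ofReal_mul (mul_nonneg (hφ.1 _ (by positivity)) (Real.rpow_nonneg two_pos.le _))]
  apply ENNReal.ofReal_le_ofReal
  have hsplit : ((cnt:ℝ) * a^p) ^ (1/p) = (cnt:ℝ)^(1/p) * a := by
    rw [Real.mul_rpow (Nat.cast_nonneg cnt) (Real.rpow_nonneg ha p),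
      ← Real.rpow_mul ha, mul_one_div, div_self hp.ne', Real.rpow_one]
  rw [hsplit, show φ ((2:ℝ)^(n:ℕ)) * (2:ℝ)^((-(n:ℝ)) * ((d:ℝ)/p)) * ((cnt:ℝ)^(1/p) * a)
      = φ ((2:ℝ)^(n:ℕ)) * (2:ℝ)^((-(n:ℝ)) * ((d:ℝ)/p)) * (cnt:ℝ)^(1/p) * a from by ring]
  exact mul_le_mul_of_nonneg_right
    (core_upper d p hp φ hφ n n₀ cnt (card_boxT_le₁ d n k _) (card_boxT_le₂ d n n₀ k)) ha

lemma levelNorm_zero_ge (d : ℕ) (p : ℝ) (hp : 0 < p) (φ : ℝ → ℝ)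
    (n₀ : ℕ) (a : ℝ) (ha : 0 ≤ a) (hφpos : 0 ≤ φ ((2:ℝ)^(n₀:ℕ))) :
    ENNReal.ofReal (φ ((2:ℝ)^(n₀:ℕ)) * a) ≤ levelNorm d φ p 0 (testFun a ((2:ℤ)^n₀) d) := by
  rw [levelNorm]
  refine le_iSup_of_le (-(n₀:ℤ)) (le_iSup_of_le (by simp) (le_iSup_of_le 0 ?_))
  simp only [Nat.cast_zero, Int.cast_neg, Int.cast_natCast, sub_zero, two_zpow_neg_neg']
  rw [tsum_test' d p a hp ha ((2:ℤ)^n₀) n₀ 0, card_boxT_eq d n₀]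
  rw [show (((2^(n₀*d) : ℕ)) : ℝ≥0∞) = ENNReal.ofReal (((2^(n₀*d):ℕ)):ℝ) from
      (ENNReal.ofReal_natCast _).symm,
    ← ENNReal.ofReal_mul (Nat.cast_nonneg _),
    ENNReal.ofReal_rpow_of_nonneg (mul_nonneg (Nat.cast_nonneg _) (Real.rpow_nonneg ha p))
      (by positivity),
    ← ENNReal.ofReal_mul hφpos,
    ← ENNReal.ofReal_mul (mul_nonneg hφpos (Real.rpow_nonneg two_pos.le _))]
  apply ENNReal.ofReal_le_ofReal
  have hsplit : (((2^(n₀*d):ℕ):ℝ) * a^p) ^ (1/p) = (2:ℝ)^(((n₀:ℝ))*(d:ℝ)*(1/p)) * a := by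
    rw [Real.mul_rpow (Nat.cast_nonneg _) (Real.rpow_nonneg ha p),
      ← Real.rpow_mul ha, mul_one_div, div_self hp.ne', Real.rpow_one,
      show (((2^(n₀*d):ℕ)):ℝ) = (2:ℝ)^(((n₀:ℝ))*(d:ℝ)) from by
        rw [show ((n₀:ℝ)*(d:ℝ)) = ((n₀*d : ℕ):ℝ) by push_cast; ring, Real.rpow_natCast]
        push_cast; ring,
      ← Real.rpow_mul two_pos.le]
  rw [hsplit, show φ ((2:ℝ)^(n₀:ℕ)) * (2:ℝ)^((-(n₀:ℝ)) * ((d:ℝ)/p)) *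
      ((2:ℝ)^(((n₀:ℝ))*(d:ℝ)*(1/p)) * a)
      = φ ((2:ℝ)^(n₀:ℕ)) * ((2:ℝ)^((-(n₀:ℝ)) * ((d:ℝ)/p)) * (2:ℝ)^(((n₀:ℝ))*(d:ℝ)*(1/p))) * a
      from by ring,
    ← Real.rpow_add two_pos, show (-(n₀:ℝ)) * ((d:ℝ)/p) + ((n₀:ℝ))*(d:ℝ)*(1/p) = 0 by ring,
    Real.rpow_zero, mul_one]

lemma levelNorm_zero_fun (d : ℕ) (φ : ℝ → ℝ) (p : ℝ) (hp : 0 < p) (j : ℕ) :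
    levelNorm d φ p j (fun _ => 0) = 0 := by
  rw [levelNorm]
  refine le_antisymm (iSup_le fun ν => iSup_le fun _ => iSup_le fun k => ?_) zero_le
  rw [show (∑' _ : {m : Fin d → ℤ // dyadicCube d (j:ℤ) m ⊆ dyadicCube d ν k},
      ENNReal.ofReal (‖(0:ℂ)‖ ^ p)) = 0 from by simp [Real.zero_rpow hp.ne'],
    ENNReal.zero_rpow_of_pos (by positivity), mul_zero]

lemma bmNorm_le_one (d : ℕ) (φ : ℝ → ℝ) (s p : ℝ) (q : ℝ≥0∞) (hq : 0 < q)
    (lam : ℕ → (Fin d → ℤ) → ℂ)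
    (h0 : ∀ j : ℕ, j ≠ 0 → levelNorm d φ p j (lam j) = 0)
    (hl : levelNorm d φ p 0 (lam 0) ≤ 1) :
    bmNorm d φ s p q lam ≤ 1 := by
  have hzero : ∀ j : ℕ, j ≠ 0 →
      ENNReal.ofReal ((2:ℝ)^((j:ℝ)*s)) * levelNorm d φ p j (lam j) = 0 := by
    intro j hj
    rw [h0 j hj, mul_zero]
  have hzeroterm : ENNReal.ofReal ((2:ℝ)^(((0:ℕ):ℝ)*s)) = 1 := by
    norm_num
  rw [bmNorm]
  split_ifs with h
  · refine iSup_le fun j => ?_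
    rcases eq_or_ne j 0 with rfl | hj
    · rw [hzeroterm, one_mul]; exact hl
    · rw [hzero j hj]; exact zero_le_one
  · have hq0 : 0 < q.toReal := ENNReal.toReal_pos hq.ne' h
    have ht : (∑' j : ℕ, (ENNReal.ofReal ((2:ℝ)^((j:ℝ)*s)) * levelNorm d φ p j (lam j)) ^ q.toReal)
        = (ENNReal.ofReal ((2:ℝ)^(((0:ℕ):ℝ)*s)) * levelNorm d φ p 0 (lam 0)) ^ q.toReal :=
      tsum_eq_single 0 (fun j hj => by rw [hzero j hj, ENNReal.zero_rpow_of_pos hq0])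
    rw [ht, hzeroterm, one_mul]
    calc (levelNorm d φ p 0 (lam 0) ^ q.toReal) ^ (1/q.toReal)
        ≤ ((1:ℝ≥0∞) ^ q.toReal) ^ (1/q.toReal) :=
          ENNReal.rpow_le_rpow (ENNReal.rpow_le_rpow hl hq0.le) (by positivity)
      _ = 1 := by simp

lemma le_bmNorm (d : ℕ) (φ : ℝ → ℝ) (s p : ℝ) (q : ℝ≥0∞) (hq : 0 < q)
    (lam : ℕ → (Fin d → ℤ) → ℂ)
    (h0 : ∀ j : ℕ, j ≠ 0 → levelNorm d φ p j (lam j) = 0) :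
    levelNorm d φ p 0 (lam 0) ≤ bmNorm d φ s p q lam := by
  have hzero : ∀ j : ℕ, j ≠ 0 →
      ENNReal.ofReal ((2:ℝ)^((j:ℝ)*s)) * levelNorm d φ p j (lam j) = 0 := by
    intro j hj
    rw [h0 j hj, mul_zero]
  have hzeroterm : ENNReal.ofReal ((2:ℝ)^(((0:ℕ):ℝ)*s)) = 1 := by
    norm_num
  rw [bmNorm]
  split_ifs with h
  · refine le_iSup_of_le 0 ?_
    rw [hzeroterm, one_mul]
  · have hq0 : 0 < q.toReal := ENNReal.toReal_pos hq.ne' h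
    have ht : (∑' j : ℕ, (ENNReal.ofReal ((2:ℝ)^((j:ℝ)*s)) * levelNorm d φ p j (lam j)) ^ q.toReal)
        = (ENNReal.ofReal ((2:ℝ)^(((0:ℕ):ℝ)*s)) * levelNorm d φ p 0 (lam 0)) ^ q.toReal :=
      tsum_eq_single 0 (fun j hj => by rw [hzero j hj, ENNReal.zero_rpow_of_pos hq0])
    rw [ht, hzeroterm, one_mul, ← ENNReal.rpow_mul, mul_one_div, div_self hq0.ne',
      ENNReal.rpow_one]

/-- necessity of the first condition, case `p₁ ≥ p₂`: if the embedding
`n^{s₁}_{φ₁,p₁,q₁} ↪ n^{s₂}_{φ₂,p₂,q₂}` is bounded and `p₂ ≤ p₁` (so `ρ = 1`), then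
`sup_{ν ≤ 0} φ₂(2^{-ν})/φ₁(2^{-ν}) < ∞`. -/
theorem embedding_necessity_cond0 (d : ℕ) (hd : 1 ≤ d)
    (s₁ s₂ p₁ p₂ : ℝ) (q₁ q₂ : ℝ≥0∞)
    (hp₂ : 0 < p₂) (hp₂₁ : p₂ ≤ p₁) (hq₁ : 0 < q₁) (hq₂ : 0 < q₂)
    (φ₁ φ₂ : ℝ → ℝ) (hφ₁ : memG d p₁ φ₁) (hφ₂ : memG d p₂ φ₂)
    (hφ₁1 : φ₁ 1 = 1) (hφ₂1 : φ₂ 1 = 1)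
    (C : ℝ≥0∞) (hC : C < ∞)
    (hemb : ∀ lam : ℕ → (Fin d → ℤ) → ℂ,
      bmNorm d φ₂ s₂ p₂ q₂ lam ≤ C * bmNorm d φ₁ s₁ p₁ q₁ lam) :
    (⨆ (ν : ℤ) (_ : ν ≤ (0 : ℤ)),
      ENNReal.ofReal (φ₂ ((2 : ℝ) ^ (-ν))) / ENNReal.ofReal (φ₁ ((2 : ℝ) ^ (-ν)))) < ∞ := by
  have hp₁ : 0 < p₁ := lt_of_lt_of_le hp₂ hp₂₁
  refine lt_of_le_of_lt (iSup_le fun ν => iSup_le fun hν => ?_) hC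
  obtain ⟨n₀, rfl⟩ : ∃ n₀ : ℕ, ν = -(n₀:ℤ) := ⟨(-ν).toNat, by omega⟩
  rw [two_zpow_neg_neg']
  set t₀ : ℝ := (2:ℝ)^(n₀:ℕ) with ht₀
  have ht₀pos : (0:ℝ) < t₀ := by positivity
  have ht₀1 : (1:ℝ) ≤ t₀ := one_le_pow₀ one_le_two
  have hφ₁t : (1:ℝ) ≤ φ₁ t₀ := by
    calc (1:ℝ) = φ₁ 1 := hφ₁1.symm
      _ ≤ φ₁ t₀ := hφ₁.2.1 (Set.mem_Ioi.mpr one_pos) (Set.mem_Ioi.mpr ht₀pos) ht₀1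
  have hφ₁pos : (0:ℝ) < φ₁ t₀ := lt_of_lt_of_le one_pos hφ₁t
  set a : ℝ := (φ₁ t₀)⁻¹ with haa
  have ha : (0:ℝ) ≤ a := inv_nonneg.mpr hφ₁pos.le
  set lam : ℕ → (Fin d → ℤ) → ℂ :=
    fun j => if j = 0 then testFun a ((2:ℤ)^n₀) d else fun _ => 0 with hlam
  have hlam0 : lam 0 = testFun a ((2:ℤ)^n₀) d := rfl
  have hlamj : ∀ j : ℕ, j ≠ 0 → lam j = fun _ => 0 := fun j hj => by
    simp [hlam, hj]
  have hlev0₁ : ∀ j : ℕ, j ≠ 0 → levelNorm d φ₁ p₁ j (lam j) = 0 := fun j hj => by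
    rw [hlamj j hj]; exact levelNorm_zero_fun d φ₁ p₁ hp₁ j
  have hlev0₂ : ∀ j : ℕ, j ≠ 0 → levelNorm d φ₂ p₂ j (lam j) = 0 := fun j hj => by
    rw [hlamj j hj]; exact levelNorm_zero_fun d φ₂ p₂ hp₂ j
  have hub : levelNorm d φ₁ p₁ 0 (lam 0) ≤ 1 := by
    rw [hlam0]
    refine le_trans (levelNorm_zero_le d p₁ hp₁ φ₁ hφ₁ n₀ a ha) ?_
    rw [← ht₀, haa, mul_inv_cancel₀ hφ₁pos.ne', ENNReal.ofReal_one]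
  have hlb : ENNReal.ofReal (φ₂ t₀ * a) ≤ levelNorm d φ₂ p₂ 0 (lam 0) := by
    rw [hlam0]
    exact levelNorm_zero_ge d p₂ hp₂ φ₂ n₀ a ha (hφ₂.1 _ ht₀pos)
  have hchain : ENNReal.ofReal (φ₂ t₀ * a) ≤ C := by
    calc ENNReal.ofReal (φ₂ t₀ * a) ≤ levelNorm d φ₂ p₂ 0 (lam 0) := hlb
      _ ≤ bmNorm d φ₂ s₂ p₂ q₂ lam := le_bmNorm d φ₂ s₂ p₂ q₂ hq₂ lam hlev0₂
      _ ≤ C * bmNorm d φ₁ s₁ p₁ q₁ lam := hemb lam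
      _ ≤ C * 1 := mul_le_mul_right (bmNorm_le_one d φ₁ s₁ p₁ q₁ hq₁ lam hlev0₁ hub) C
      _ = C := mul_one C
  rw [ENNReal.div_le_iff (by
      simp only [ne_eq, ENNReal.ofReal_eq_zero, not_le]; exact hφ₁pos)
    ENNReal.ofReal_ne_top]
  calc ENNReal.ofReal (φ₂ t₀)
      = ENNReal.ofReal (φ₂ t₀ * a) * ENNReal.ofReal (φ₁ t₀) := by
        rw [← ENNReal.ofReal_mul (mul_nonneg (hφ₂.1 _ ht₀pos) ha), mul_assoc, haa,
          inv_mul_cancel₀ hφ₁pos.ne', mul_one]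
    _ ≤ C * ENNReal.ofReal (φ₁ t₀) := mul_le_mul_left hchain _
end

section
/- Let 0 < p < ∞, 0 < q ≤ ∞, s ∈ ℝ, φ ∈ G_p. If inf_{t>0} φ(t) > 0 then ‖λ | b^s_{∞,q}‖ ≤ C·‖λ | n^s_{φ,p,q}‖, where b^s_{∞,q} has quasi-norm (Σ_j 2^{jsq}·sup_{m} |λ_{j,m}|^q)^{1/q}; if sup_{t>0} φ(t) < ∞ then the reverse estimate ‖λ | n^s_{φ,p,q}‖ ≤ C·‖λ | b^s_{∞,q}‖ holds. In particular, if 0 < inf φ ≤ sup φ < ∞ then n^s_{φ,p,q} = b^s_{∞,q} with equivalent quasi-norms. -/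
set_option maxHeartbeats 1000000


open MeasureTheory ENNReal NNReal

/-- The quasi-norm of the Besov sequence space `b^s_{∞,q}`:
`(Σ_j 2^{jsq}·(sup_m |λ_{j,m}|)^q)^{1/q}` (sup modification for `q = ∞`). -/
noncomputable def besovInftyNorm (d : ℕ) (s : ℝ) (q : ℝ≥0∞)
    (lam : ℕ → (Fin d → ℤ) → ℂ) : ℝ≥0∞ :=
  if q = ∞ then
    ⨆ j : ℕ, ENNReal.ofReal ((2 : ℝ) ^ ((j : ℝ) * s)) *
      ⨆ m : Fin d → ℤ, ENNReal.ofReal ‖lam j m‖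
  else (∑' j : ℕ,
      (ENNReal.ofReal ((2 : ℝ) ^ ((j : ℝ) * s)) *
        ⨆ m : Fin d → ℤ, ENNReal.ofReal ‖lam j m‖) ^ q.toReal) ^ (1 / q.toReal)

lemma cube_subset_coord {d : ℕ} {j ν : ℤ} {k m : Fin d → ℤ} (hν : ν ≤ j)
    (h : dyadicCube d j m ⊆ dyadicCube d ν k) (i : Fin d) :
    2 ^ (j - ν).toNat * k i ≤ m i ∧ m i < 2 ^ (j - ν).toNat * (k i + 1) := by
  have h2j : (0:ℝ) < (2:ℝ) ^ (j:ℤ) := zpow_pos (by norm_num) _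
  have h2mj : (0:ℝ) < (2:ℝ) ^ (-j:ℤ) := zpow_pos (by norm_num) _
  have hx : (fun i => (2:ℝ)^(-j) * (m i : ℝ)) ∈ dyadicCube d j m := by
    intro i
    exact ⟨le_rfl, mul_lt_mul_of_pos_left (lt_add_one _) h2mj⟩
  obtain ⟨h1, h2⟩ := h hx i
  have ht : ((2:ℝ) ^ (j - ν).toNat) = (2:ℝ) ^ (j - ν) := by
    rw [← zpow_natCast, Int.toNat_of_nonneg (by omega)]
  have e2 : (2:ℝ)^(j:ℤ) * ((2:ℝ)^(-j) * (m i : ℝ)) = (m i : ℝ) := by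
    rw [← mul_assoc, ← zpow_add₀ (two_ne_zero (α := ℝ)), add_neg_cancel, zpow_zero, one_mul]
  have e1 : (2:ℝ)^(j:ℤ) * (2:ℝ)^(-ν:ℤ) = (2:ℝ)^(j - ν) := by
    rw [← zpow_add₀ (two_ne_zero (α := ℝ))]; ring_nf
  constructor
  · have H := mul_le_mul_of_nonneg_left h1 h2j.le
    rw [e2] at H
    rw [← mul_assoc, e1] at H
    have : ((2 ^ (j - ν).toNat * k i : ℤ) : ℝ) ≤ ((m i : ℤ) : ℝ) := by
      push_cast; rw [ht]; exact H
    exact_mod_cast this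
  · have H := mul_lt_mul_of_pos_left h2 h2j
    rw [e2] at H
    rw [← mul_assoc, e1] at H
    have : ((m i : ℤ) : ℝ) < ((2 ^ (j - ν).toNat * (k i + 1) : ℤ) : ℝ) := by
      push_cast; rw [ht]; exact H
    exact_mod_cast this

lemma tsum_cube_le {d : ℕ} {j ν : ℤ} {k : Fin d → ℤ} (hν : ν ≤ j)
    (f : (Fin d → ℤ) → ℝ≥0∞) (B : ℝ≥0∞) (hf : ∀ m, f m ≤ B) :
    ∑' m : {m : Fin d → ℤ // dyadicCube d j m ⊆ dyadicCube d ν k}, f m.1 ≤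
      ((2 ^ ((j - ν).toNat * d) : ℕ) : ℝ≥0∞) * B := by
  let F : {m : Fin d → ℤ // dyadicCube d j m ⊆ dyadicCube d ν k} →
      (Fin d → Fin (2 ^ (j - ν).toNat)) :=
    fun m i => ⟨(m.1 i - 2 ^ (j - ν).toNat * k i).toNat, by
      have h := cube_subset_coord hν m.2 i
      have hcast : ((2 ^ (j - ν).toNat : ℕ) : ℤ) = 2 ^ (j - ν).toNat := by push_cast; ring
      have hsplit : (2:ℤ) ^ (j - ν).toNat * (k i + 1) =
          2 ^ (j - ν).toNat * k i + 2 ^ (j - ν).toNat := by ring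
      omega⟩
  have hFinj : Function.Injective F := by
    intro a b hab
    apply Subtype.ext; funext i
    have h1 := cube_subset_coord hν a.2 i
    have h2 := cube_subset_coord hν b.2 i
    have h3 : ((a.1 i - 2 ^ (j - ν).toNat * k i).toNat : ℕ) =
        (b.1 i - 2 ^ (j - ν).toNat * k i).toNat :=
      congrArg Fin.val (congrFun hab i)
    have hsplit : (2:ℤ) ^ (j - ν).toNat * (k i + 1) =
        2 ^ (j - ν).toNat * k i + 2 ^ (j - ν).toNat := by ring
    omega
  have : Finite {m : Fin d → ℤ // dyadicCube d j m ⊆ dyadicCube d ν k} :=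
    Finite.of_injective F hFinj
  have hft := Fintype.ofFinite {m : Fin d → ℤ // dyadicCube d j m ⊆ dyadicCube d ν k}
  rw [tsum_fintype]
  calc ∑ m : {m : Fin d → ℤ // dyadicCube d j m ⊆ dyadicCube d ν k}, f m.1
      ≤ (Fintype.card {m : Fin d → ℤ // dyadicCube d j m ⊆ dyadicCube d ν k}) • B :=
        Finset.sum_le_card_nsmul _ _ _ (fun i _ => hf _)
    _ = ((Fintype.card {m : Fin d → ℤ // dyadicCube d j m ⊆ dyadicCube d ν k} : ℕ) : ℝ≥0∞) * B := by
        rw [nsmul_eq_mul]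
    _ ≤ ((2 ^ ((j - ν).toNat * d) : ℕ) : ℝ≥0∞) * B := by
        refine mul_le_mul_left ?_ B
        have hc := Fintype.card_le_of_injective F hFinj
        have hcard : Fintype.card (Fin d → Fin (2 ^ (j - ν).toNat)) = 2 ^ ((j - ν).toNat * d) := by
          simp [Fintype.card_fun, pow_mul]
        rw [hcard] at hc
        exact_mod_cast hc

lemma norm_combine (q : ℝ≥0∞) (hq : 0 < q) (C : ℝ≥0∞) (a b : ℕ → ℝ≥0∞)
    (h : ∀ j, a j ≤ C * b j) :
    (if q = ∞ then ⨆ j, a j else (∑' j, (a j) ^ q.toReal) ^ (1 / q.toReal)) ≤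
      C * (if q = ∞ then ⨆ j, b j else (∑' j, (b j) ^ q.toReal) ^ (1 / q.toReal)) := by
  split_ifs with hq'
  · exact iSup_le fun j => (h j).trans (mul_le_mul_right (le_iSup b j) C)
  · have hr : 0 < q.toReal := ENNReal.toReal_pos hq.ne' hq'
    calc (∑' j, (a j) ^ q.toReal) ^ (1 / q.toReal)
        ≤ (∑' j, (C * b j) ^ q.toReal) ^ (1 / q.toReal) :=
          ENNReal.rpow_le_rpow (ENNReal.tsum_le_tsum fun j =>
            ENNReal.rpow_le_rpow (h j) hr.le) (by positivity)
      _ = (C ^ q.toReal * ∑' j, (b j) ^ q.toReal) ^ (1 / q.toReal) := by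
          simp_rw [ENNReal.mul_rpow_of_nonneg _ _ hr.le, ENNReal.tsum_mul_left]
      _ = C * (∑' j, (b j) ^ q.toReal) ^ (1 / q.toReal) := by
          rw [ENNReal.mul_rpow_of_nonneg _ _ (by positivity), ← ENNReal.rpow_mul,
            mul_one_div_cancel hr.ne', ENNReal.rpow_one]

lemma sup_le_levelNorm (d : ℕ) (φ : ℝ → ℝ) {p : ℝ} (hp : 0 < p) (j : ℕ)
    (lam : (Fin d → ℤ) → ℂ) {ε : ℝ} (hε : 0 < ε) (hεφ : ∀ t, 0 < t → ε ≤ φ t) :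
    ENNReal.ofReal ε * (⨆ m, ENNReal.ofReal ‖lam m‖) ≤ levelNorm d φ p j lam := by
  rw [ENNReal.mul_iSup]
  refine iSup_le fun m => ?_
  unfold levelNorm
  refine le_iSup_of_le ((j:ℤ)) (le_iSup_of_le le_rfl (le_iSup_of_le m ?_))
  have hexp : ((((j:ℤ)) : ℝ) - (j : ℝ)) * ((d : ℝ) / p) = 0 := by push_cast; ring
  rw [hexp, Real.rpow_zero, ENNReal.ofReal_one, mul_one]
  refine mul_le_mul' (ENNReal.ofReal_le_ofReal (hεφ _ (zpow_pos (by norm_num) _))) ?_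
  have h1 : ENNReal.ofReal (‖lam m‖ ^ p) ≤
      ∑' m' : {m' : Fin d → ℤ // dyadicCube d (j : ℤ) m' ⊆ dyadicCube d (j:ℤ) m},
        ENNReal.ofReal (‖lam m'.1‖ ^ p) :=
    ENNReal.le_tsum (⟨m, subset_rfl⟩ :
      {m' : Fin d → ℤ // dyadicCube d (j : ℤ) m' ⊆ dyadicCube d (j:ℤ) m})
  have h2 := ENNReal.rpow_le_rpow h1 (one_div_nonneg.mpr hp.le)
  rwa [← ENNReal.ofReal_rpow_of_nonneg (by positivity) hp.le, ← ENNReal.rpow_mul,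
    mul_one_div_cancel hp.ne', ENNReal.rpow_one] at h2

lemma levelNorm_le_sup (d : ℕ) (φ : ℝ → ℝ) {p : ℝ} (hp : 0 < p) (j : ℕ)
    (lam : (Fin d → ℤ) → ℂ) {A : ℝ} (hA0 : 0 ≤ A) (hA : ∀ t, 0 < t → φ t ≤ A) :
    levelNorm d φ p j lam ≤
      ENNReal.ofReal A * ⨆ m, ENNReal.ofReal ‖lam m‖ := by
  refine iSup_le fun ν => iSup_le fun hν => iSup_le fun k => ?_
  set S := ⨆ m, ENNReal.ofReal ‖lam m‖ with hS
  have htsum : (∑' m : {m : Fin d → ℤ // dyadicCube d (j : ℤ) m ⊆ dyadicCube d ν k},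
        ENNReal.ofReal (‖lam m.1‖ ^ p)) ≤
      ((2 ^ (((j:ℤ) - ν).toNat * d) : ℕ) : ℝ≥0∞) * S ^ p := by
    refine tsum_cube_le hν (fun x => ENNReal.ofReal (‖lam x‖ ^ p)) (S ^ p)
      fun m => ?_
    show ENNReal.ofReal (‖lam m‖ ^ p) ≤ S ^ p
    rw [← ENNReal.ofReal_rpow_of_nonneg (by positivity) hp.le]
    exact ENNReal.rpow_le_rpow (le_iSup (fun m => ENNReal.ofReal ‖lam m‖) m) hp.le
  have h2 : (∑' m : {m : Fin d → ℤ // dyadicCube d (j : ℤ) m ⊆ dyadicCube d ν k},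
        ENNReal.ofReal (‖lam m.1‖ ^ p)) ^ (1 / p) ≤
      ((2 ^ (((j:ℤ) - ν).toNat * d) : ℕ) : ℝ≥0∞) ^ (1 / p) * S := by
    calc _ ≤ (((2 ^ (((j:ℤ) - ν).toNat * d) : ℕ) : ℝ≥0∞) * S ^ p) ^ (1 / p) :=
          ENNReal.rpow_le_rpow htsum (one_div_nonneg.mpr hp.le)
      _ = _ := by
          rw [ENNReal.mul_rpow_of_nonneg _ _ (one_div_nonneg.mpr hp.le), ← ENNReal.rpow_mul,
            mul_one_div_cancel hp.ne', ENNReal.rpow_one]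
  have hkey : ENNReal.ofReal ((2 : ℝ) ^ (((ν : ℝ) - (j : ℝ)) * ((d : ℝ) / p))) *
      ((2 ^ (((j:ℤ) - ν).toNat * d) : ℕ) : ℝ≥0∞) ^ (1 / p) = 1 := by
    have htr : ((((j:ℤ) - ν).toNat : ℕ) : ℝ) = (j : ℝ) - (ν : ℝ) := by
      have h1 : ((((j:ℤ) - ν).toNat : ℕ) : ℤ) = (j:ℤ) - ν := Int.toNat_of_nonneg (by omega)
      exact_mod_cast h1
    have hN : ((2 ^ (((j:ℤ) - ν).toNat * d) : ℕ) : ℝ≥0∞) =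
        ENNReal.ofReal ((2 : ℝ) ^ (((j:ℤ) - ν).toNat * d)) := by
      rw [← ENNReal.ofReal_natCast]
      congr 1
      push_cast
      ring
    have hNp : ((2 ^ (((j:ℤ) - ν).toNat * d) : ℕ) : ℝ≥0∞) ^ (1 / p) =
        ENNReal.ofReal (((2 : ℝ) ^ (((j:ℤ) - ν).toNat * d)) ^ (1 / p)) := by
      rw [hN, ENNReal.ofReal_rpow_of_nonneg (by positivity) (one_div_nonneg.mpr hp.le)]
    rw [hNp, ← ENNReal.ofReal_mul (by positivity)]
    have hreal : (2 : ℝ) ^ (((ν : ℝ) - (j : ℝ)) * ((d : ℝ) / p)) *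
        ((2 : ℝ) ^ (((j:ℤ) - ν).toNat * d)) ^ (1 / p) = 1 := by
      rw [← Real.rpow_natCast (2:ℝ) ((((j:ℤ) - ν).toNat) * d),
        ← Real.rpow_mul (by norm_num : (0:ℝ) ≤ 2),
        ← Real.rpow_add (by norm_num : (0:ℝ) < 2)]
      have hz : (((ν : ℝ) - (j : ℝ)) * ((d : ℝ) / p)) +
          (((((j:ℤ) - ν).toNat * d : ℕ)) : ℝ) * (1 / p) = 0 := by
        push_cast
        rw [htr]
        ring
      rw [hz, Real.rpow_zero]
    rw [hreal, ENNReal.ofReal_one]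
  have hφA : ENNReal.ofReal (φ ((2 : ℝ) ^ (-ν))) ≤ ENNReal.ofReal A :=
    ENNReal.ofReal_le_ofReal (hA _ (zpow_pos (by norm_num) _))
  calc ENNReal.ofReal (φ ((2 : ℝ) ^ (-ν))) *
      ENNReal.ofReal ((2 : ℝ) ^ (((ν : ℝ) - (j : ℝ)) * ((d : ℝ) / p))) *
      (∑' m : {m : Fin d → ℤ // dyadicCube d (j : ℤ) m ⊆ dyadicCube d ν k},
          ENNReal.ofReal (‖lam m.1‖ ^ p)) ^ (1 / p)
      ≤ ENNReal.ofReal A * ENNReal.ofReal ((2 : ℝ) ^ (((ν : ℝ) - (j : ℝ)) * ((d : ℝ) / p))) *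
        (((2 ^ (((j:ℤ) - ν).toNat * d) : ℕ) : ℝ≥0∞) ^ (1 / p) * S) :=
        mul_le_mul' (mul_le_mul' hφA le_rfl) h2
    _ = ENNReal.ofReal A * (ENNReal.ofReal ((2 : ℝ) ^ (((ν : ℝ) - (j : ℝ)) * ((d : ℝ) / p))) *
        ((2 ^ (((j:ℤ) - ν).toNat * d) : ℕ) : ℝ≥0∞) ^ (1 / p)) * S := by ring
    _ = ENNReal.ofReal A * S := by rw [hkey, mul_one]

/-- if `inf_{t>0} φ(t) > 0` then `n^s_{φ,p,q} ↪ b^s_{∞,q}`;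
if `sup_{t>0} φ(t) < ∞` then `b^s_{∞,q} ↪ n^s_{φ,p,q}`; in particular, if
`0 < inf φ ≤ sup φ < ∞` then the two spaces coincide with equivalent quasi-norms. -/
theorem bm_versus_besov_infty (d : ℕ) (hd : 1 ≤ d) (s p : ℝ) (q : ℝ≥0∞)
    (hp : 0 < p) (hq : 0 < q)
    (φ : ℝ → ℝ) (hφ : memG d p φ) :
    ((∃ ε : ℝ, 0 < ε ∧ ∀ t : ℝ, 0 < t → ε ≤ φ t) →
      ∃ C : ℝ≥0∞, C < ∞ ∧ ∀ lam : ℕ → (Fin d → ℤ) → ℂ,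
        besovInftyNorm d s q lam ≤ C * bmNorm d φ s p q lam) ∧
    ((∃ A : ℝ, ∀ t : ℝ, 0 < t → φ t ≤ A) →
      ∃ C : ℝ≥0∞, C < ∞ ∧ ∀ lam : ℕ → (Fin d → ℤ) → ℂ,
        bmNorm d φ s p q lam ≤ C * besovInftyNorm d s q lam) := by
  obtain ⟨hφ0, hφmono, hφanti⟩ := hφ
  constructor
  · rintro ⟨ε, hε, hεφ⟩
    have h0 : ENNReal.ofReal ε ≠ 0 := (ENNReal.ofReal_pos.mpr hε).ne'
    refine ⟨(ENNReal.ofReal ε)⁻¹, ENNReal.inv_lt_top.mpr (ENNReal.ofReal_pos.mpr hε), fun lam => ?_⟩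
    have key : ∀ j : ℕ,
        ENNReal.ofReal ((2 : ℝ) ^ ((j : ℝ) * s)) *
          ⨆ m : Fin d → ℤ, ENNReal.ofReal ‖lam j m‖ ≤
        (ENNReal.ofReal ε)⁻¹ *
          (ENNReal.ofReal ((2 : ℝ) ^ ((j : ℝ) * s)) * levelNorm d φ p j (lam j)) := by
      intro j
      have h1 := sup_le_levelNorm d φ hp j (lam j) hε hεφ
      have hcancel : (ENNReal.ofReal ε)⁻¹ * ENNReal.ofReal ε = 1 :=
        ENNReal.inv_mul_cancel h0 ENNReal.ofReal_ne_top
      calc ENNReal.ofReal ((2 : ℝ) ^ ((j : ℝ) * s)) *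
          ⨆ m : Fin d → ℤ, ENNReal.ofReal ‖lam j m‖
          = 1 * (ENNReal.ofReal ((2 : ℝ) ^ ((j : ℝ) * s)) *
            ⨆ m : Fin d → ℤ, ENNReal.ofReal ‖lam j m‖) := (one_mul _).symm
        _ = (ENNReal.ofReal ε)⁻¹ * (ENNReal.ofReal ((2 : ℝ) ^ ((j : ℝ) * s)) *
            (ENNReal.ofReal ε * ⨆ m : Fin d → ℤ, ENNReal.ofReal ‖lam j m‖)) := by
            rw [← hcancel]; ring
        _ ≤ _ := mul_le_mul_right (mul_le_mul_right h1 _) _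
    exact norm_combine q hq _ _ _ key
  · rintro ⟨A, hA⟩
    have hA0 : 0 ≤ A := le_trans (hφ0 1 one_pos) (hA 1 one_pos)
    refine ⟨ENNReal.ofReal A, ENNReal.ofReal_lt_top, fun lam => ?_⟩
    have key : ∀ j : ℕ,
        ENNReal.ofReal ((2 : ℝ) ^ ((j : ℝ) * s)) * levelNorm d φ p j (lam j) ≤
        ENNReal.ofReal A * (ENNReal.ofReal ((2 : ℝ) ^ ((j : ℝ) * s)) *
          ⨆ m : Fin d → ℤ, ENNReal.ofReal ‖lam j m‖) := by
      intro j
      have h1 := levelNorm_le_sup d φ hp j (lam j) hA0 hA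
      calc ENNReal.ofReal ((2 : ℝ) ^ ((j : ℝ) * s)) * levelNorm d φ p j (lam j)
          ≤ ENNReal.ofReal ((2 : ℝ) ^ ((j : ℝ) * s)) * (ENNReal.ofReal A *
            ⨆ m : Fin d → ℤ, ENNReal.ofReal ‖lam j m‖) :=
            mul_le_mul_right h1 _
        _ = _ := by ring
    exact norm_combine q hq _ _ _ key
end

section
/- Let d ≥ 1, j₀ ∈ ℕ₀, ν₀ ∈ ℤ with ν₀ ≤ j₀, and let N ∈ ℕ with 1 ≤ N ≤ 2^{(j₀−ν₀)d}. Then there exists a set S of dyadic cubes Q_{j₀,m} ⊂ Q_{ν₀,0} with #S = N such that for every intermediate dyadic cube Q_{ν,k} ⊂ Q_{ν₀,0} with ν₀ < ν < j₀, the number of cubes of S contained in Q_{ν,k} is at most 2^{-d(ν−ν₀)}·N + 1/(1 − 2^{-d}). -/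
open Finset

/-- `gnat d J n i`: coordinate `i` of the `n`-th point in bit-reversed van der Corput order
at depth `J` (base `2^d` digits of `n`, digit `s` placed at binary position `J-1-s`). -/
def gnat (d : ℕ) : ℕ → ℕ → ℕ → ℕ
  | 0, _, _ => 0
  | (J+1), n, i => gnat d J (n / 2^d) i + (n / 2^i % 2) * 2^J

lemma gnat_lt (d J n i : ℕ) : gnat d J n i < 2^J := by
  induction J generalizing n with
  | zero => simp [gnat]
  | succ J ih =>
    have h1 := ih (n / 2^d)
    have h2 : n / 2^i % 2 ≤ 1 := Nat.lt_succ_iff.mp (Nat.mod_lt _ (by norm_num))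
    have h3 : (n / 2^i % 2) * 2^J ≤ 2^J := by
      calc (n / 2^i % 2) * 2^J ≤ 1 * 2^J := Nat.mul_le_mul_right _ h2
      _ = 2^J := one_mul _
    show gnat d J (n / 2^d) i + (n / 2^i % 2) * 2^J < 2^(J+1)
    have : (2:ℕ)^(J+1) = 2^J + 2^J := by ring
    omega

/-- bits below `d` determine the residue mod `2^d`. -/
lemma mod_pow_eq_of_bits (d : ℕ) {n n' : ℕ} (h : ∀ i < d, n / 2^i % 2 = n' / 2^i % 2) :
    n % 2^d = n' % 2^d := by
  induction d with
  | zero => simp [Nat.mod_one]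
  | succ d ih =>
    rw [Nat.mod_pow_succ, Nat.mod_pow_succ, ih (fun i hi => h i (Nat.lt_succ_of_lt hi)),
      h d (Nat.lt_succ_self d)]

lemma gnat_inj (d : ℕ) : ∀ (J : ℕ) {n n' : ℕ}, n < 2^(d*J) → n' < 2^(d*J) →
    (∀ i < d, gnat d J n i = gnat d J n' i) → n = n' := by
  intro J
  induction J with
  | zero => intro n n' h h' _; simp [Nat.mul_zero] at h h'; omega
  | succ J ih =>
    intro n n' hn hn' h
    have key : ∀ i < d, n / 2^i % 2 = n' / 2^i % 2 ∧
        gnat d J (n / 2^d) i = gnat d J (n' / 2^d) i := by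
      intro i hi
      have e := h i hi
      simp only [gnat] at e
      have l1 := gnat_lt d J (n / 2^d) i
      have l2 := gnat_lt d J (n' / 2^d) i
      have b1 : n / 2^i % 2 ≤ 1 := Nat.lt_succ_iff.mp (Nat.mod_lt _ (by norm_num))
      have b2 : n' / 2^i % 2 ≤ 1 := Nat.lt_succ_iff.mp (Nat.mod_lt _ (by norm_num))
      rcases Nat.le_one_iff_eq_zero_or_eq_one.mp b1 with hb | hb <;>
      rcases Nat.le_one_iff_eq_zero_or_eq_one.mp b2 with hb' | hb' <;>
      rw [hb, hb'] at e <;> exact ⟨by omega, by omega⟩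
    have hdiv : n / 2^d = n' / 2^d := by
      apply ih
      · apply Nat.div_lt_of_lt_mul
        calc n < 2^(d*(J+1)) := hn
        _ = 2^d * 2^(d*J) := by rw [← pow_add]; ring_nf
      · apply Nat.div_lt_of_lt_mul
        calc n' < 2^(d*(J+1)) := hn'
        _ = 2^d * 2^(d*J) := by rw [← pow_add]; ring_nf
      · exact fun i hi => (key i hi).2
    have hmod : n % 2^d = n' % 2^d := mod_pow_eq_of_bits d (fun i hi => (key i hi).1)
    rw [← Nat.div_add_mod n (2^d), ← Nat.div_add_mod n' (2^d), hdiv, hmod]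

/-- the top `t` binary digits of the coordinate give the depth-`t` point. -/
lemma gnat_div (d : ℕ) : ∀ (t u n i : ℕ), gnat d (t + u) n i / 2^u = gnat d t n i := by
  intro t
  induction t with
  | zero => intro u n i; simp [gnat, Nat.div_eq_of_lt (gnat_lt d u n i)]
  | succ t ih =>
    intro u n i
    have h1 : gnat d (t+1+u) n i = gnat d (t+u) (n/2^d) i + (n/2^i % 2) * 2^(t+u) := by
      have ht : t+1+u = (t+u)+1 := by omega
      rw [ht]; rfl
    have h2 : (n / 2^i % 2) * 2^(t+u) = (n / 2^i % 2) * 2^t * 2^u := by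
      rw [pow_add, mul_assoc]
    rw [h1, h2, Nat.add_mul_div_right _ _ (Nat.two_pow_pos u), ih]
    rfl

/-- `gnat d t` only depends on `n` modulo `2^(d*t)`. -/
lemma gnat_mod (d : ℕ) : ∀ (t n i : ℕ), i < d → gnat d t (n % 2^(d*t)) i = gnat d t n i := by
  intro t
  induction t with
  | zero => intro n i _; rfl
  | succ t ih =>
    intro n i hi
    show gnat d t (n % 2^(d*(t+1)) / 2^d) i + (n % 2^(d*(t+1)) / 2^i % 2) * 2^t
        = gnat d t (n / 2^d) i + (n / 2^i % 2) * 2^t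
    have hpow : (2:ℕ)^(d*(t+1)) = 2^d * 2^(d*t) := by rw [← pow_add]; ring_nf
    have h1 : n % 2^(d*(t+1)) / 2^d = n / 2^d % 2^(d*t) := by
      rw [hpow, Nat.mod_mul_right_div_self]
    have h2 : n % 2^(d*(t+1)) / 2^i % 2 = n / 2^i % 2 := by
      rw [← Nat.mod_mul_right_div_self, ← Nat.mod_mul_right_div_self n]
      congr 1
      rw [Nat.mod_mod_of_dvd]
      refine ⟨2^(d*(t+1) - (i+1)), ?_⟩
      rw [mul_assoc, ← pow_succ', ← pow_add]
      congr 1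
      have : i + 1 ≤ d * (t+1) := le_trans hi (Nat.le_mul_of_pos_right d (Nat.succ_pos t))
      omega
    rw [h1, h2, ih _ i hi]

lemma cube_subset_iff {d : ℕ} (j ν : ℤ) (hνj : ν ≤ j) (m k : Fin d → ℤ) :
    dyadicCube d j m ⊆ dyadicCube d ν k ↔
      ∀ i, k i * 2^((j-ν).toNat) ≤ m i ∧ m i + 1 ≤ (k i + 1) * 2^((j-ν).toNat) := by
  have hpj : (0:ℝ) < (2:ℝ) ^ (-j) := zpow_pos (by norm_num) _
  have hkey : (2:ℝ) ^ (-ν) = (2:ℝ) ^ (-j) * ((2:ℝ) ^ ((j-ν).toNat)) := by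
    rw [← zpow_natCast (2:ℝ) ((j-ν).toNat), ← zpow_add₀ (two_ne_zero)]
    congr 1
    omega
  constructor
  · intro hsub i
    have hx : (fun i => (2:ℝ)^(-j) * (m i : ℝ)) ∈ dyadicCube d j m := by
      intro i'
      refine ⟨le_refl _, ?_⟩
      exact mul_lt_mul_of_pos_left (lt_add_one _) hpj
    have hx' := hsub hx i
    obtain ⟨h1, h2⟩ := hx'
    rw [hkey] at h1 h2
    constructor
    · have h1' : (k i : ℝ) * 2^((j-ν).toNat) ≤ (m i : ℝ) :=
        le_of_mul_le_mul_left (by nlinarith [h1]) hpj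
      exact_mod_cast h1'
    · have h2' : (m i : ℝ) < ((k i : ℝ) + 1) * 2^((j-ν).toNat) :=
        lt_of_mul_lt_mul_left (by nlinarith [h2]) hpj.le
      have : (m i : ℤ) < (k i + 1) * 2^((j-ν).toNat) := by exact_mod_cast h2'
      omega
  · intro h x hx i
    obtain ⟨h1, h2⟩ := hx i
    obtain ⟨c1, c2⟩ := h i
    have c1' : (k i : ℝ) * 2^((j-ν).toNat) ≤ (m i : ℝ) := by exact_mod_cast c1
    have c2' : (m i : ℝ) + 1 ≤ ((k i : ℝ) + 1) * 2^((j-ν).toNat) := by exact_mod_cast c2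
    rw [hkey]
    constructor
    · calc (2:ℝ)^(-j) * 2^((j-ν).toNat) * (k i : ℝ)
          = (2:ℝ)^(-j) * ((k i : ℝ) * 2^((j-ν).toNat)) := by ring
      _ ≤ (2:ℝ)^(-j) * (m i : ℝ) := by
          exact mul_le_mul_of_nonneg_left c1' hpj.le
      _ ≤ x i := h1
    · calc x i < (2:ℝ)^(-j) * ((m i : ℝ) + 1) := h2
      _ ≤ (2:ℝ)^(-j) * (((k i : ℝ) + 1) * 2^((j-ν).toNat)) := by
          exact mul_le_mul_of_nonneg_left c2' hpj.le
      _ = (2:ℝ)^(-j) * 2^((j-ν).toNat) * ((k i : ℝ) + 1) := by ring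

def gfun (d J : ℕ) (n : ℕ) : Fin d → ℤ := fun i => (gnat d J n (i : ℕ) : ℤ)

/-- for `d ≥ 1`, `ν₀ ≤ j₀` and `1 ≤ N ≤ 2^{(j₀−ν₀)d}`, there is a set `S` of
`N` dyadic cubes `Q_{j₀,m} ⊆ Q_{ν₀,0}` such that every intermediate dyadic cube
`Q_{ν,k} ⊆ Q_{ν₀,0}` with `ν₀ < ν < j₀` contains at most `2^{-d(ν−ν₀)}·N + 1/(1 − 2^{-d})`
of the cubes of `S`. -/
theorem uniform_distribution_of_cubes (d : ℕ) (hd : 1 ≤ d) (j₀ : ℕ) (ν₀ : ℤ)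
    (hν₀ : ν₀ ≤ (j₀ : ℤ)) (N : ℕ) (hN1 : 1 ≤ N)
    (hN2 : (N : ℝ) ≤ (2 : ℝ) ^ ((((j₀ : ℝ) - (ν₀ : ℝ))) * (d : ℝ))) :
    ∃ S : Set (Fin d → ℤ), S.Finite ∧ S.ncard = N ∧
      (∀ m ∈ S, dyadicCube d (j₀ : ℤ) m ⊆ dyadicCube d ν₀ 0) ∧
      ∀ (ν : ℤ) (k : Fin d → ℤ), ν₀ < ν → ν < (j₀ : ℤ) →
        dyadicCube d ν k ⊆ dyadicCube d ν₀ 0 →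
        (({m ∈ S | dyadicCube d (j₀ : ℤ) m ⊆ dyadicCube d ν k}).ncard : ℝ) ≤
          (2 : ℝ) ^ (-(d : ℝ) * ((ν : ℝ) - (ν₀ : ℝ))) * (N : ℝ) +
            1 / (1 - (2 : ℝ) ^ (-(d : ℝ))) := by
  classical
  set J : ℕ := ((j₀ : ℤ) - ν₀).toNat with hJdef
  have hJ : (J : ℤ) = (j₀ : ℤ) - ν₀ := Int.toNat_of_nonneg (by omega)
  have hJR : (J : ℝ) = (j₀ : ℝ) - (ν₀ : ℝ) := by exact_mod_cast hJ
  -- N ≤ 2^(d*J)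
  have hNB : N ≤ 2 ^ (d * J) := by
    have he : (((j₀ : ℝ) - (ν₀ : ℝ))) * (d : ℝ) = ((d * J : ℕ) : ℝ) := by
      push_cast
      rw [← hJR]; ring
    have h2 : (2 : ℝ) ^ ((((j₀ : ℝ) - (ν₀ : ℝ))) * (d : ℝ)) = ((2 ^ (d * J) : ℕ) : ℝ) := by
      rw [he, Real.rpow_natCast]; push_cast; ring
    rw [h2] at hN2
    exact_mod_cast hN2
  -- the injectivity of gfun on range N
  have hginj : Set.InjOn (gfun d J) ↑(Finset.range N) := by
    intro n hn n' hn' hgeq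
    simp only [Finset.coe_range, Set.mem_Iio] at hn hn'
    refine gnat_inj d J (lt_of_lt_of_le hn hNB) (lt_of_lt_of_le hn' hNB) ?_
    intro i hi
    have := congrFun hgeq ⟨i, hi⟩
    simpa [gfun] using this
  refine ⟨↑((Finset.range N).image (gfun d J)), Finset.finite_toSet _, ?_, ?_, ?_⟩
  · rw [Set.ncard_coe_finset, Finset.card_image_of_injOn hginj, Finset.card_range]
  · -- containment in Q_{ν₀,0}
    intro m hm
    obtain ⟨n, hn, rfl⟩ := Finset.mem_image.mp hm
    refine (cube_subset_iff (j₀ : ℤ) ν₀ hν₀ _ 0).mpr ?_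
    intro i
    have h1 := gnat_lt d J n (i : ℕ)
    constructor
    · simp only [Pi.zero_apply, zero_mul, gfun]
      positivity
    · simp only [Pi.zero_apply, zero_add, one_mul, gfun]
      have : ((j₀ : ℤ) - ν₀).toNat = J := rfl
      rw [this]
      have : (gnat d J n (i : ℕ) : ℤ) < (2 : ℤ) ^ J := by exact_mod_cast h1
      omega
  · -- the counting estimate
    intro ν k hν1 hν2 _
    set t : ℕ := (ν - ν₀).toNat with htdef
    have ht : (t : ℤ) = ν - ν₀ := Int.toNat_of_nonneg (by omega)
    have htR : (t : ℝ) = (ν : ℝ) - (ν₀ : ℝ) := by exact_mod_cast ht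
    have ht1 : 1 ≤ t := by omega
    have htJ : t < J := by omega
    have hjνt : ((j₀ : ℤ) - ν).toNat = J - t := by omega
    set B : ℕ := 2 ^ (d * t) with hBdef
    have hBpos : 0 < B := Nat.two_pow_pos _
    set A : Finset ℕ := (Finset.range N).filter
      (fun n => dyadicCube d (j₀ : ℤ) (gfun d J n) ⊆ dyadicCube d ν k) with hAdef
    -- key : elements of A have determined depth-t prefix
    have hpre : ∀ n ∈ A, ∀ i (hi : i < d), gnat d t n i = (k ⟨i, hi⟩).toNat := by
      intro n hn i hi
      have hsub := (Finset.mem_filter.mp hn).2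
      have hcond := (cube_subset_iff (j₀ : ℤ) ν (by omega) _ k).mp hsub ⟨i, hi⟩
      rw [hjνt] at hcond
      obtain ⟨c1, c2⟩ := hcond
      simp only [gfun] at c1 c2
      have hg0 : (0 : ℤ) ≤ (gnat d J n i : ℤ) := Int.natCast_nonneg _
      have hpow : (0 : ℤ) < 2 ^ (J - t) := by positivity
      have hk0 : 0 ≤ k ⟨i, hi⟩ := by
        by_contra hneg
        push_neg at hneg
        have hk1 : k ⟨i, by omega⟩ + 1 ≤ 0 := by omega
        nlinarith
      set κ : ℕ := (k ⟨i, hi⟩).toNat with hκdef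
      have hκ : (κ : ℤ) = k ⟨i, hi⟩ := Int.toNat_of_nonneg hk0
      have c1' : κ * 2 ^ (J - t) ≤ gnat d J n i := by
        have : (κ : ℤ) * 2 ^ (J - t) ≤ (gnat d J n i : ℤ) := by rw [hκ]; exact c1
        exact_mod_cast this
      have c2' : gnat d J n i < (κ + 1) * 2 ^ (J - t) := by
        have hz : (gnat d J n i : ℤ) + 1 ≤ ((κ : ℤ) + 1) * 2 ^ (J - t) := by rw [hκ]; exact c2
        have c2n : gnat d J n i + 1 ≤ (κ + 1) * 2 ^ (J - t) := by exact_mod_cast hz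
        exact Nat.lt_of_succ_le c2n
      have hdiv : gnat d J n i / 2 ^ (J - t) = κ := Nat.div_eq_of_lt_le c1' c2'
      have hJt : t + (J - t) = J := by omega
      have := gnat_div d t (J - t) n i
      rw [hJt] at this
      rw [← this, hdiv]
    -- all elements of A agree mod B
    have hmodeq : ∀ n ∈ A, ∀ n' ∈ A, n % B = n' % B := by
      intro n hn n' hn'
      refine gnat_inj d t (Nat.mod_lt _ hBpos) (Nat.mod_lt _ hBpos) ?_
      intro i hi
      rw [gnat_mod d t n i hi, gnat_mod d t n' i hi, hpre n hn i hi, hpre n' hn' i hi]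
    -- card A ≤ (N + B - 1)/B
    have hcardA : A.card ≤ (N + B - 1) / B := by
      have := Finset.card_le_card_of_injOn (s := A) (t := Finset.range ((N + B - 1) / B)) (fun n => n / B)
        (fun n hn => by
          have hnN : n < N := Finset.mem_range.mp (Finset.mem_filter.mp hn).1
          have h1 : n / B ≤ (N - 1) / B := Nat.div_le_div_right (by omega)
          have h2 : (N - 1 + B) / B = (N - 1) / B + 1 := Nat.add_div_right _ hBpos
          have h3 : N + B - 1 = N - 1 + B := by omega
          refine Finset.mem_range.mpr ?_
          show n / B < (N + B - 1) / B
          rw [h3, h2]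
          omega)
        (fun n hn n' hn' hdd => by
          have hm := hmodeq n hn n' hn'
          have hdd' : n / B = n' / B := hdd
          rw [← Nat.div_add_mod n B, ← Nat.div_add_mod n' B, hm, hdd'])
      simpa using this
    -- relate the set to A
    have hTsub : {m ∈ ↑((Finset.range N).image (gfun d J)) |
        dyadicCube d (j₀ : ℤ) m ⊆ dyadicCube d ν k} ⊆ ↑(A.image (gfun d J)) := by
      rintro m ⟨hmS, hmP⟩
      obtain ⟨n, hn, rfl⟩ := Finset.mem_image.mp hmS
      exact Finset.mem_coe.mpr (Finset.mem_image.mpr ⟨n, Finset.mem_filter.mpr ⟨hn, hmP⟩, rfl⟩)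
    have hT1 : ({m ∈ ↑((Finset.range N).image (gfun d J)) |
        dyadicCube d (j₀ : ℤ) m ⊆ dyadicCube d ν k}).ncard ≤ (N + B - 1) / B := by
      calc _ ≤ (↑(A.image (gfun d J)) : Set _).ncard :=
            Set.ncard_le_ncard hTsub (Finset.finite_toSet _)
      _ = (A.image (gfun d J)).card := Set.ncard_coe_finset _
      _ ≤ A.card := Finset.card_image_le
      _ ≤ (N + B - 1) / B := hcardA
    -- pass to the reals
    have hBR : (0 : ℝ) < (B : ℝ) := by exact_mod_cast hBpos
    have hreal1 : (((N + B - 1) / B : ℕ) : ℝ) ≤ (N : ℝ) / (B : ℝ) + 1 := by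
      calc (((N + B - 1) / B : ℕ) : ℝ) ≤ ((N + B - 1 : ℕ) : ℝ) / (B : ℝ) := Nat.cast_div_le
      _ ≤ ((N : ℝ) + (B : ℝ)) / (B : ℝ) := by
          gcongr
          have h1 : 1 ≤ N + B := by omega
          push_cast [Nat.cast_sub h1]
          linarith
      _ = (N : ℝ) / (B : ℝ) + 1 := by field_simp
    have hBcast : (B : ℝ) = (2 : ℝ) ^ (d * t) := by rw [hBdef]; push_cast; ring
    have hrpow : (2 : ℝ) ^ (-(d : ℝ) * ((ν : ℝ) - (ν₀ : ℝ))) * (N : ℝ) = (N : ℝ) / (B : ℝ) := by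
      have hexp : -(d : ℝ) * ((ν : ℝ) - (ν₀ : ℝ)) = -((d * t : ℕ) : ℝ) := by
        push_cast
        rw [← htR]
        ring
      rw [hexp, Real.rpow_neg (by norm_num), Real.rpow_natCast, ← hBcast, inv_mul_eq_div]
    have hone : (1 : ℝ) ≤ 1 / (1 - (2 : ℝ) ^ (-(d : ℝ))) := by
      have h2d : (2 : ℝ) ^ (-(d : ℝ)) = ((2 : ℝ) ^ (d : ℕ))⁻¹ := by
        rw [Real.rpow_neg (by norm_num), Real.rpow_natCast]
      have hge : (2 : ℝ) ≤ (2 : ℝ) ^ (d : ℕ) := by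
        calc (2 : ℝ) = 2 ^ 1 := (pow_one 2).symm
        _ ≤ 2 ^ d := pow_le_pow_right₀ (by norm_num) hd
      have hinv : ((2 : ℝ) ^ (d : ℕ))⁻¹ ≤ 2⁻¹ := by
        apply inv_anti₀ (by norm_num) hge
      rw [h2d]
      have hden : (0 : ℝ) < 1 - ((2 : ℝ) ^ (d : ℕ))⁻¹ := by
        have : (2 : ℝ)⁻¹ < 1 := by norm_num
        linarith
      rw [le_div_iff₀ hden]
      have hnn : (0 : ℝ) ≤ ((2 : ℝ) ^ (d : ℕ))⁻¹ := by positivity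
      linarith
    calc (({m ∈ (↑((Finset.range N).image (gfun d J)) : Set (Fin d → ℤ)) |
          dyadicCube d (j₀ : ℤ) m ⊆ dyadicCube d ν k}).ncard : ℝ)
        ≤ (((N + B - 1) / B : ℕ) : ℝ) := by exact_mod_cast hT1
    _ ≤ (N : ℝ) / (B : ℝ) + 1 := hreal1
    _ ≤ (2 : ℝ) ^ (-(d : ℝ) * ((ν : ℝ) - (ν₀ : ℝ))) * (N : ℝ) +
          1 / (1 - (2 : ℝ) ^ (-(d : ℝ))) := by
        rw [hrpow]
        linarith
end
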